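/- arXiv:2103.00544 — 4 statements merged into one kernel-verified Lean document; each statement's English description precedes it below -/
import Mathlib

section
/- For every word w = (w_1,...,w_n) in {0,2}^n and every k with 1 ≤ k ≤ n, the sum over all ξ ∈ {0,2}^k of the squared number of occurrences of ξ as a factor of w, averaged over all w ∈ {0,2}^n with uniform probability, equals (n-k+1) + (n-k)(n-k+1)·2^{-k}. -/
open Finset

/-- Number of occurrences of the word `ξ` (of length `k`) as a contiguous factor of
the word `w` (of length `n`): the number of indices `0 ≤ i ≤ n - k` such that
`(w_{i+1}, …, w_{i+k}) = ξ`. -/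
def occCount {α : Type*} [DecidableEq α] {n k : ℕ} (w : Fin n → α) (ξ : Fin k → α) : ℕ :=
  ((Finset.range (n - k + 1)).filter
    (fun i => ((List.ofFn w).drop i).take k = List.ofFn ξ)).card

/-- The set of distinct contiguous factors of length `k` of the word `w`. -/
def factorSet {α : Type*} [DecidableEq α] {n : ℕ} (w : Fin n → α) (k : ℕ) :
    Finset (List α) :=
  (Finset.range (n - k + 1)).image (fun i => ((List.ofFn w).drop i).take k)

lemma factor_eq_iff {β : Type*} [DecidableEq β] {n k i j : ℕ} (w : Fin n → β)
    (hi : i + k ≤ n) (hj : j + k ≤ n) :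
    ((List.ofFn w).drop i).take k = ((List.ofFn w).drop j).take k ↔
      ∀ t, (ht : t < k) → w ⟨i + t, by omega⟩ = w ⟨j + t, by omega⟩ := by
  constructor
  · intro h t ht
    have h1 : (((List.ofFn w).drop i).take k)[t]'(by
        simp [List.length_take, List.length_drop]; omega) =
        (((List.ofFn w).drop j).take k)[t]'(by
        simp [List.length_take, List.length_drop]; omega) := by
      simp_rw [h]
    simpa [List.getElem_take, List.getElem_drop, List.getElem_ofFn] using h1
  · intro h
    apply List.ext_getElem
    · simp [List.length_take, List.length_drop]; omega
    · intro t h1 h2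
      have ht : t < k := by
        simp [List.length_take, List.length_drop] at h1; omega
      simpa [List.getElem_take, List.getElem_drop, List.getElem_ofFn] using h t ht

lemma aux_card_fixed {α β : Type*} [Finite α] [Finite β]
    (ρ : α → α) (hρ : ∀ a, ρ (ρ a) = ρ a) :
    Nat.card {w : α → β // ∀ a, w (ρ a) = w a} =
      Nat.card β ^ Nat.card {a : α // ρ a = a} := by
  have e : {w : α → β // ∀ a, w (ρ a) = w a} ≃ ({a : α // ρ a = a} → β) :=
    { toFun := fun w a => w.1 a.1
      invFun := fun u => ⟨fun a => u ⟨ρ a, hρ a⟩, fun a => by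
        show u ⟨ρ (ρ a), _⟩ = u ⟨ρ a, _⟩
        exact congrArg u (Subtype.ext (hρ a))⟩
      left_inv := fun w => Subtype.ext (funext fun a => w.2 a)
      right_inv := fun u => funext fun a => congrArg u (Subtype.ext a.2) }
  rw [Nat.card_congr e, Nat.card_fun]

set_option maxHeartbeats 1000000 in
lemma count_pair {β : Type*} [Fintype β] [DecidableEq β] {n k i j : ℕ}
    (hk : 1 ≤ k) (hij : i < j) (hj : j + k ≤ n) :
    Nat.card {w : Fin n → β //
        ∀ t, (ht : t < k) → w ⟨i + t, by omega⟩ = w ⟨j + t, by omega⟩}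
      = Nat.card β ^ (n - k) := by
  set d := j - i with hd
  have hd0 : 0 < d := by omega
  have hρmem : ∀ p : Fin n, j ≤ p.val → p.val < j + k → i + (p.val - j) % d < n := by
    intro p h1 h2
    have := Nat.mod_lt (p.val - j) hd0
    omega
  set ρ : Fin n → Fin n := fun p =>
    if h : j ≤ p.val ∧ p.val < j + k then ⟨i + (p.val - j) % d, hρmem p h.1 h.2⟩ else p
    with hρdef
  have hval : ∀ p : Fin n, (h : j ≤ p.val ∧ p.val < j + k) →
      (ρ p).val = i + (p.val - j) % d := by
    intro p h; simp [hρdef, h]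
  have hvalout : ∀ p : Fin n, ¬(j ≤ p.val ∧ p.val < j + k) → ρ p = p := by
    intro p h; simp [hρdef, h]
  have hsmall : ∀ p : Fin n, (h : j ≤ p.val ∧ p.val < j + k) → (ρ p).val < j := by
    intro p h
    have := Nat.mod_lt (p.val - j) hd0
    rw [hval p h]; omega
  have hidem : ∀ p, ρ (ρ p) = ρ p := by
    intro p
    by_cases h : j ≤ p.val ∧ p.val < j + k
    · exact hvalout _ (by have := hsmall p h; omega)
    · rw [hvalout p h, hvalout p h]
  have hfixcard : Nat.card {p : Fin n // ρ p = p} = n - k := by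
    rw [Nat.card_eq_fintype_card]
    have hiff : ∀ p : Fin n, ρ p = p ↔ ¬(j ≤ p.val ∧ p.val < j + k) := by
      intro p
      constructor
      · intro h hmem
        have := hsmall p hmem
        rw [h] at this; omega
      · exact hvalout p
    rw [Fintype.card_subtype]
    have heq : (univ.filter fun p : Fin n => ρ p = p) =
        univ.filter fun p : Fin n => ¬(j ≤ p.val ∧ p.val < j + k) := by
      apply Finset.filter_congr; intro p _; simp [hiff p]
    rw [heq]
    rw [Finset.filter_not, Finset.card_sdiff_of_subset (Finset.filter_subset _ _)]
    have hwin : (univ.filter fun p : Fin n => j ≤ p.val ∧ p.val < j + k).card = k := by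
      rw [← Fintype.card_subtype]
      have e : {p : Fin n // j ≤ p.val ∧ p.val < j + k} ≃ Fin k :=
        { toFun := fun p => ⟨p.1.val - j, by obtain ⟨h1, h2⟩ := p.2; omega⟩
          invFun := fun t => ⟨⟨j + t.val, by omega⟩,
            show j ≤ j + t.val ∧ j + t.val < j + k from ⟨by omega, by omega⟩⟩
          left_inv := fun p => Subtype.ext (Fin.ext
            (show j + (p.1.val - j) = p.1.val by obtain ⟨h1, h2⟩ := p.2; omega))
          right_inv := fun t => Fin.ext (show j + t.val - j = t.val by omega) }
      rw [Fintype.card_congr e, Fintype.card_fin]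
    rw [hwin, Finset.card_univ, Fintype.card_fin]
  have hcond : ∀ w : Fin n → β,
      (∀ t, (ht : t < k) → w ⟨i + t, by omega⟩ = w ⟨j + t, by omega⟩) ↔
        ∀ p, w (ρ p) = w p := by
    intro w
    constructor
    · intro h p
      by_cases hp : j ≤ p.val ∧ p.val < j + k
      · suffices H : ∀ s (hs : s < k),
            w ⟨i + s % d, by have := Nat.mod_lt s hd0; omega⟩ = w ⟨j + s, by omega⟩ by
          have e3 : ρ p = ⟨i + (p.val - j) % d,
              by have := Nat.mod_lt (p.val - j) hd0; omega⟩ := Fin.ext (hval p hp)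
          have e4 : p = ⟨j + (p.val - j), by omega⟩ :=
            Fin.ext (show p.val = j + (p.val - j) by omega)
          rw [e3]
          conv_rhs => rw [e4]
          exact H (p.val - j) (by omega)
        intro s
        induction s using Nat.strong_induction_on with
        | _ s ih =>
          intro hs
          by_cases hsd : s < d
          · have hA : (⟨i + s % d, by have := Nat.mod_lt s hd0; omega⟩ : Fin n)
                = ⟨i + s, by omega⟩ := Fin.ext (by simp [Nat.mod_eq_of_lt hsd])
            rw [hA]; exact h s hs
          · have hmod : s % d = (s - d) % d := Nat.mod_eq_sub_mod (by omega)
            have hA : (⟨i + s % d, by have := Nat.mod_lt s hd0; omega⟩ : Fin n)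
                = ⟨i + (s - d) % d, by have := Nat.mod_lt (s - d) hd0; omega⟩ :=
              Fin.ext (by simp [hmod])
            have hB : (⟨j + (s - d), by omega⟩ : Fin n) = ⟨i + s, by omega⟩ :=
              Fin.ext (by simp; omega)
            calc w ⟨i + s % d, by have := Nat.mod_lt s hd0; omega⟩
                = w ⟨i + (s - d) % d, by have := Nat.mod_lt (s - d) hd0; omega⟩ :=
                  congrArg w hA
              _ = w ⟨j + (s - d), by omega⟩ := ih (s - d) (by omega) (by omega)
              _ = w ⟨i + s, by omega⟩ := congrArg w hB
              _ = w ⟨j + s, by omega⟩ := h s hs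
      · rw [hvalout p hp]
    · intro h t ht
      by_cases htd : t < d
      · have h2 : ρ ⟨j + t, by omega⟩ = ⟨i + t, by omega⟩ := by
          apply Fin.ext
          rw [hval _ (show j ≤ j + t ∧ j + t < j + k from ⟨by omega, by omega⟩)]
          simp [Nat.mod_eq_of_lt htd]
        exact (congrArg w h2).symm.trans (h ⟨j + t, by omega⟩)
      · have hmt : 0 < d := hd0
        have e1 : ρ ⟨j + t, by omega⟩
            = ⟨i + t % d, by have := Nat.mod_lt t hd0; omega⟩ := by
          apply Fin.ext
          rw [hval _ (show j ≤ j + t ∧ j + t < j + k from ⟨by omega, by omega⟩)]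
          simp
        have e2 : ρ ⟨i + t, by omega⟩
            = ⟨i + t % d, by have := Nat.mod_lt t hd0; omega⟩ := by
          apply Fin.ext
          rw [hval _ (show j ≤ i + t ∧ i + t < j + k from ⟨by omega, by omega⟩)]
          have hs1 : i + t - j = t - d := by omega
          rw [hs1, ← Nat.mod_eq_sub_mod (by omega)]
        exact ((h ⟨i + t, by omega⟩).symm.trans (congrArg w e2)).trans
          ((congrArg w e1).symm.trans (h ⟨j + t, by omega⟩))
  refine (Nat.card_congr (Equiv.subtypeEquivRight hcond)).trans
    ((aux_card_fixed ρ hidem).trans ?_)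
  rw [hfixcard]

lemma ofFn_factor {β : Type*} {n k i : ℕ} (w : Fin n → β) (h : i + k ≤ n) :
    ((List.ofFn w).drop i).take k = List.ofFn (fun t : Fin k => w ⟨i + t.val, by omega⟩) := by
  apply List.ext_getElem
  · simp [List.length_take, List.length_drop]; omega
  · intro t h1 h2
    simp [List.getElem_take, List.getElem_drop, List.getElem_ofFn]

lemma count_pair_lt {β : Type*} [Fintype β] [DecidableEq β] {n k i j : ℕ}
    (hk : 1 ≤ k) (hkn : k ≤ n) (hi : i ≤ n - k) (hj : j ≤ n - k) (hij : i < j) :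
    ((univ : Finset (Fin n → β)).filter
      (fun w => ((List.ofFn w).drop i).take k = ((List.ofFn w).drop j).take k)).card
      = Fintype.card β ^ (n - k) := by
  have hin : i + k ≤ n := by omega
  have hjn : j + k ≤ n := by omega
  rw [← Fintype.card_subtype, ← Nat.card_eq_fintype_card]
  have h1 : Nat.card {w : Fin n → β //
      ((List.ofFn w).drop i).take k = ((List.ofFn w).drop j).take k} =
      Nat.card {w : Fin n → β //
        ∀ t, (ht : t < k) → w ⟨i + t, by omega⟩ = w ⟨j + t, by omega⟩} :=
    Nat.card_congr (Equiv.subtypeEquivRight (fun w => factor_eq_iff w hin hjn))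
  rw [h1, count_pair hk hij hjn, Nat.card_eq_fintype_card]

lemma count_pair_ne {β : Type*} [Fintype β] [DecidableEq β] {n k i j : ℕ}
    (hk : 1 ≤ k) (hkn : k ≤ n) (hi : i ≤ n - k) (hj : j ≤ n - k) (hij : i ≠ j) :
    ((univ : Finset (Fin n → β)).filter
      (fun w => ((List.ofFn w).drop i).take k = ((List.ofFn w).drop j).take k)).card
      = Fintype.card β ^ (n - k) := by
  rcases lt_or_gt_of_ne hij with h | h
  · exact count_pair_lt hk hkn hi hj h
  · have : ((univ : Finset (Fin n → β)).filter
      (fun w => ((List.ofFn w).drop i).take k = ((List.ofFn w).drop j).take k)) =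
      ((univ : Finset (Fin n → β)).filter
      (fun w => ((List.ofFn w).drop j).take k = ((List.ofFn w).drop i).take k)) := by
      apply Finset.filter_congr; intro w _; simp [eq_comm]
    rw [this]
    exact count_pair_lt hk hkn hj hi h

theorem statement0 (n k : ℕ) (hk : 1 ≤ k) (hkn : k ≤ n) :
    (∑ w : Fin n → ({0, 2} : Finset ℕ), ∑ ξ : Fin k → ({0, 2} : Finset ℕ),
        (occCount w ξ : ℝ) ^ 2) / 2 ^ n
      = ((n : ℝ) - k + 1) + ((n : ℝ) - k) * ((n : ℝ) - k + 1) / 2 ^ k := by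
  set β := (({0, 2} : Finset ℕ) : Type) with hβ
  have hcard : Fintype.card β = 2 := by
    rw [Fintype.card_coe]; decide
  set R := Finset.range (n - k + 1) with hR
  -- Step A: rewrite the big sum
  have hmain : (∑ w : Fin n → β, ∑ ξ : Fin k → β, (occCount w ξ : ℝ) ^ 2)
      = ∑ i ∈ R, ∑ j ∈ R,
          (((univ : Finset (Fin n → β)).filter
            (fun w => ((List.ofFn w).drop i).take k
              = ((List.ofFn w).drop j).take k)).card : ℝ) := by
    have step1 : ∀ w : Fin n → β, ∑ ξ : Fin k → β, (occCount w ξ : ℝ) ^ 2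
        = ∑ i ∈ R, ∑ j ∈ R, (if ((List.ofFn w).drop i).take k
            = ((List.ofFn w).drop j).take k then (1:ℝ) else 0) := by
      intro w
      have occ : ∀ ξ : Fin k → β, (occCount w ξ : ℝ)
          = ∑ i ∈ R, (if ((List.ofFn w).drop i).take k = List.ofFn ξ then (1:ℝ) else 0) := by
        intro ξ
        rw [occCount, Finset.card_filter]
        push_cast
        rfl
      calc ∑ ξ : Fin k → β, (occCount w ξ : ℝ) ^ 2
          = ∑ ξ : Fin k → β, ∑ i ∈ R, ∑ j ∈ R,
              ((if ((List.ofFn w).drop i).take k = List.ofFn ξ then (1:ℝ) else 0) *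
               (if ((List.ofFn w).drop j).take k = List.ofFn ξ then (1:ℝ) else 0)) := by
            refine Finset.sum_congr rfl fun ξ _ => ?_
            rw [occ ξ, sq, Finset.sum_mul_sum]
        _ = ∑ i ∈ R, ∑ j ∈ R, ∑ ξ : Fin k → β,
              ((if ((List.ofFn w).drop i).take k = List.ofFn ξ then (1:ℝ) else 0) *
               (if ((List.ofFn w).drop j).take k = List.ofFn ξ then (1:ℝ) else 0)) := by
            rw [Finset.sum_comm]
            refine Finset.sum_congr rfl fun i _ => Finset.sum_comm
        _ = ∑ i ∈ R, ∑ j ∈ R, (if ((List.ofFn w).drop i).take k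
              = ((List.ofFn w).drop j).take k then (1:ℝ) else 0) := by
            refine Finset.sum_congr rfl fun i hi => Finset.sum_congr rfl fun j hj => ?_
            rw [Finset.mem_range] at hi hj
            have hin : i + k ≤ n := by omega
            have hjn : j + k ≤ n := by omega
            set ξi : Fin k → β := fun t => w ⟨i + t.val, by omega⟩ with hξi
            set ξj : Fin k → β := fun t => w ⟨j + t.val, by omega⟩ with hξj
            have ei : ((List.ofFn w).drop i).take k = List.ofFn ξi := ofFn_factor w hin
            have ej : ((List.ofFn w).drop j).take k = List.ofFn ξj := ofFn_factor w hjn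
            rw [ei, ej]
            have key : ∀ ξ : Fin k → β,
                ((if List.ofFn ξi = List.ofFn ξ then (1:ℝ) else 0) *
                 (if List.ofFn ξj = List.ofFn ξ then (1:ℝ) else 0))
                = ((if ξ = ξi then (1:ℝ) else 0) * (if ξ = ξj then (1:ℝ) else 0)) := by
              intro ξ
              have c1 : (List.ofFn ξi = List.ofFn ξ) ↔ (ξ = ξi) := by
                rw [List.ofFn_injective.eq_iff]; exact eq_comm
              have c2 : (List.ofFn ξj = List.ofFn ξ) ↔ (ξ = ξj) := by
                rw [List.ofFn_injective.eq_iff]; exact eq_comm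
              rw [if_congr c1 rfl rfl, if_congr c2 rfl rfl]
            rw [Finset.sum_congr rfl fun ξ _ => key ξ]
            by_cases hij : ξi = ξj
            · rw [if_pos (congrArg List.ofFn hij), hij]
              have hone : ∀ ξ : Fin k → β,
                  (if ξ = ξj then (1:ℝ) else 0) * (if ξ = ξj then (1:ℝ) else 0)
                  = if ξ = ξj then (1:ℝ) else 0 := by
                intro ξ; by_cases h : ξ = ξj <;> simp [h]
              rw [Finset.sum_congr rfl fun ξ _ => hone ξ,
                Finset.sum_ite_eq' univ ξj fun _ => (1:ℝ)]
              simp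
            · rw [if_neg (fun hh => hij (List.ofFn_injective hh))]
              apply Finset.sum_eq_zero
              intro ξ _
              by_cases h1 : ξ = ξi
              · have h2 : ¬ ξ = ξj := fun hh => hij (h1.symm.trans hh)
                rw [if_neg h2, mul_zero]
              · rw [if_neg h1, zero_mul]
    rw [Finset.sum_congr rfl fun w _ => step1 w, Finset.sum_comm]
    refine Finset.sum_congr rfl fun i _ => ?_
    rw [Finset.sum_comm]
    refine Finset.sum_congr rfl fun j _ => ?_
    rw [Finset.sum_boole]
  -- Step B: evaluate the double sum
  have hval : ∀ i ∈ R, ∀ j ∈ R,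
      (((univ : Finset (Fin n → β)).filter
        (fun w => ((List.ofFn w).drop i).take k
          = ((List.ofFn w).drop j).take k)).card : ℝ)
      = if i = j then (2:ℝ)^n else (2:ℝ)^(n-k) := by
    intro i hi j hj
    rw [Finset.mem_range] at hi hj
    by_cases hij : i = j
    · rw [if_pos hij, hij]
      rw [Finset.filter_true_of_mem (fun _ _ => rfl), Finset.card_univ,
        Fintype.card_fun, hcard, Fintype.card_fin]
      push_cast; rfl
    · rw [if_neg hij, count_pair_ne hk hkn (by omega) (by omega) hij, hcard]
      push_cast; rfl
  rw [hmain, Finset.sum_congr rfl fun i hi => Finset.sum_congr rfl fun j hj => hval i hi j hj]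
  -- Step C: arithmetic
  have hsum : ∑ i ∈ R, ∑ j ∈ R, (if i = j then (2:ℝ)^n else (2:ℝ)^(n-k))
      = (n - k + 1 : ℕ) * (2:ℝ)^n + ((n - k + 1 : ℕ) * ((n - k : ℕ)) * (2:ℝ)^(n-k)) := by
    have inner : ∀ i ∈ R, ∑ j ∈ R, (if i = j then (2:ℝ)^n else (2:ℝ)^(n-k))
        = (2:ℝ)^n + ((n - k : ℕ)) * (2:ℝ)^(n-k) := by
      intro i hi
      have : ∀ j, (if i = j then (2:ℝ)^n else (2:ℝ)^(n-k))
          = (2:ℝ)^(n-k) + (if i = j then ((2:ℝ)^n - (2:ℝ)^(n-k)) else 0) := by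
        intro j; by_cases h : i = j <;> simp [h]
      rw [Finset.sum_congr rfl fun j _ => this j, Finset.sum_add_distrib,
        Finset.sum_const, Finset.sum_ite_eq R i fun _ => (2:ℝ)^n - (2:ℝ)^(n-k),
        if_pos hi, hR, Finset.card_range]
      push_cast
      ring
    rw [Finset.sum_congr rfl inner, Finset.sum_const, hR, Finset.card_range]
    push_cast
    ring
  rw [hsum]
  have h2 : ((n - k : ℕ) : ℝ) = (n : ℝ) - k := by
    push_cast [Nat.cast_sub hkn]; ring
  have hpow : (2:ℝ)^n = (2:ℝ)^(n-k) * (2:ℝ)^k := by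
    rw [← pow_add]; congr 1; omega
  have hpk : (2:ℝ)^k ≠ 0 := by positivity
  have hpnk : (2:ℝ)^(n-k) ≠ 0 := by positivity
  push_cast [Nat.cast_sub hkn]
  rw [hpow]
  field_simp
end

section
/- For all sufficiently large n, setting k = ⌊log₂ n⌋, the number of words (ε_1,...,ε_n) ∈ {0,2}^n having at least n/4 distinct subwords of length k is at least 2^n/16. -/
open Finset

/-! ### Auxiliary machinery -/

/-- The factor of `w` of length `k` starting at position `i`. -/
def fct {F : Type*} {n : ℕ} (k : ℕ) (w : Fin n → F) (i : ℕ) : List F :=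
  ((List.ofFn w).drop i).take k

lemma fct_eq {α : Type*} {n k : ℕ} (w : Fin n → α) (i : ℕ) (h : i + k ≤ n) :
    fct k w i = List.ofFn (fun t : Fin k => w ⟨i + t.1, by omega⟩) := by
  apply List.ext_getElem
  · simp [fct]; omega
  · intro m h1 h2
    simp [fct, List.getElem_take, List.getElem_drop, List.getElem_ofFn]

/-- root with fuel: repeatedly subtract `d` while in `[j, j+k)`. -/
def rootF (j k d : ℕ) : ℕ → ℕ → ℕ
  | 0, q => q
  | f + 1, q => if j ≤ q ∧ q < j + k then rootF j k d f (q - d) else q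

lemma rootF_le (j k d : ℕ) : ∀ f q, rootF j k d f q ≤ q := by
  intro f
  induction f with
  | zero => intro q; simp [rootF]
  | succ f ih => intro q
                 simp only [rootF]
                 split
                 · exact le_trans (ih _) (by omega)
                 · exact le_rfl

lemma rootF_not_mem (j k d : ℕ) (hd : 0 < d) (hj : d ≤ j) :
    ∀ f q, q ≤ f → ¬ (j ≤ rootF j k d f q ∧ rootF j k d f q < j + k) := by
  intro f
  induction f with
  | zero => intro q hq; interval_cases q; simp [rootF]; omega
  | succ f ih => intro q hq
                 simp only [rootF]
                 split
                 · exact ih _ (by omega)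
                 · assumption

lemma rootF_eq_self (j k d f q : ℕ) (h : ¬ (j ≤ q ∧ q < j + k)) : rootF j k d f q = q := by
  cases f <;> simp [rootF, h]

lemma rootF_fuel_irrel (j k d : ℕ) (hd : 0 < d) (hj : d ≤ j) :
    ∀ f₁ f₂ q, q ≤ f₁ → q ≤ f₂ → rootF j k d f₁ q = rootF j k d f₂ q := by
  intro f₁
  induction f₁ with
  | zero => intro f₂ q h1 h2
            interval_cases q
            rw [rootF_eq_self, rootF_eq_self] <;> omega
  | succ f ih => intro f₂ q h1 h2
                 by_cases hq : j ≤ q ∧ q < j + k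
                 · cases f₂ with
                   | zero => omega
                   | succ f₂ =>
                     simp only [rootF, if_pos hq]
                     exact ih _ _ (by omega) (by omega)
                 · rw [rootF_eq_self _ _ _ _ _ hq, rootF_eq_self _ _ _ _ _ hq]

lemma rootF_step (j k d f q : ℕ) (hq : j ≤ q ∧ q < j + k) :
    rootF j k d (f+1) q = rootF j k d f (q - d) := by
  simp [rootF, hq]

/-- Words invariant along root. -/
lemma word_rootF {α : Type*} (w : ℕ → α) (j k d : ℕ)
    (hw : ∀ q, j ≤ q → q < j + k → w q = w (q - d)) :
    ∀ f q, w q = w (rootF j k d f q) := by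
  intro f
  induction f with
  | zero => intro q; simp [rootF]
  | succ f ih => intro q
                 simp only [rootF]
                 split
                 · rename_i hq
                   rw [hw q hq.1 hq.2]; exact ih _
                 · rfl

section
variable {F : Type*} [Fintype F] [DecidableEq F]

def constrEquiv (n k i j : ℕ) (hij : i < j) (hjk : j + k ≤ n) :
    {w : Fin n → F // ∀ t : Fin k, w ⟨i + t.1, by omega⟩ = w ⟨j + t.1, by omega⟩} ≃
    ({q : Fin n // ¬ (j ≤ q.1 ∧ q.1 < j + k)} → F) where
  toFun w q := w.1 q.1
  invFun u := by
    refine ⟨fun q => u ⟨⟨rootF j k (j - i) n q.1, lt_of_le_of_lt (rootF_le _ _ _ _ _) q.2⟩,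
      rootF_not_mem j k (j-i) (by omega) (by omega) n q.1 (by omega)⟩, ?_⟩
    intro t
    have h1 : rootF j k (j-i) n (j + t.1) = rootF j k (j-i) n (i + t.1) := by
      obtain ⟨f, rfl⟩ : ∃ f, n = f + 1 := ⟨n - 1, by omega⟩
      rw [rootF_step j k (j-i) f (j + t.1) ⟨by omega, by omega⟩]
      have : j + t.1 - (j - i) = i + t.1 := by omega
      rw [this]
      exact rootF_fuel_irrel j k (j-i) (by omega) (by omega) f (f+1) (i+t.1) (by omega) (by omega)
    simp only
    congr 1
    exact Subtype.ext (Fin.ext h1.symm)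
  left_inv w := by
    apply Subtype.ext
    funext q
    simp only
    have hn : 0 < n := by omega
    set W : ℕ → F := fun q => if h : q < n then w.1 ⟨q, h⟩ else w.1 ⟨0, hn⟩ with hW
    have hw : ∀ p, j ≤ p → p < j + k → W p = W (p - (j - i)) := by
      intro p hp1 hp2
      have ht : p - j < k := by omega
      have := w.2 ⟨p - j, ht⟩
      simp only [hW]
      rw [dif_pos (by omega : p < n), dif_pos (by omega : p - (j-i) < n)]
      have hcong : ∀ (a b : Fin n), a.1 = b.1 → w.1 a = w.1 b :=
        fun a b h => congrArg w.1 (Fin.ext h)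
      calc w.1 ⟨p, by omega⟩ = w.1 ⟨j + (p - j), by omega⟩ :=
            hcong _ _ (show p = j + (p - j) by omega)
        _ = w.1 ⟨i + (p - j), by omega⟩ := this.symm
        _ = w.1 ⟨p - (j - i), by omega⟩ :=
            hcong _ _ (show i + (p - j) = p - (j - i) by omega)
    have key := word_rootF W j k (j - i) hw n q.1
    have hq : q.1 < n := q.2
    have hr : rootF j k (j-i) n q.1 < n := lt_of_le_of_lt (rootF_le _ _ _ _ _) hq
    simpa only [hW, dif_pos hq, dif_pos hr] using key.symm
  right_inv u := by
    funext q
    simp only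
    congr 1
    exact Subtype.ext (Fin.ext (rootF_eq_self _ _ _ _ _ q.2))

lemma card_interval_subtype (n j k : ℕ) (hjk : j + k ≤ n) :
    Fintype.card {q : Fin n // j ≤ q.1 ∧ q.1 < j + k} = k := by
  have e : {q : Fin n // j ≤ q.1 ∧ q.1 < j + k} ≃ Fin k :=
    { toFun := fun q => ⟨q.1.1 - j, by omega⟩
      invFun := fun t => ⟨⟨j + t.1, by omega⟩, ⟨Nat.le_add_right j t.1, Nat.add_lt_add_left t.2 j⟩⟩
      left_inv := fun q => Subtype.ext (Fin.ext (show j + (q.1.1 - j) = q.1.1 by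
        have := q.2.1; omega))
      right_inv := fun t => Fin.ext (by simp) }
  simp [Fintype.card_congr e]

lemma card_constr (n k i j : ℕ) (hij : i < j) (hjk : j + k ≤ n) :
    Fintype.card {w : Fin n → F // ∀ t : Fin k, w ⟨i + t.1, by omega⟩ = w ⟨j + t.1, by omega⟩}
      = Fintype.card F ^ (n - k) := by
  rw [Fintype.card_congr (constrEquiv n k i j hij hjk)]
  rw [Fintype.card_fun]
  congr 1
  rw [Fintype.card_subtype_compl, card_interval_subtype n j k hjk, Fintype.card_fin]

lemma card_filter_fct_lt (n k i j : ℕ) (hij : i < j) (hjk : j + k ≤ n) :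
    ((univ : Finset (Fin n → F)).filter fun w => fct k w i = fct k w j).card
      = Fintype.card F ^ (n - k) := by
  have hik : i + k ≤ n := by omega
  have e : ∀ w : Fin n → F, (fct k w i = fct k w j) ↔
      (∀ t : Fin k, w ⟨i + t.1, by omega⟩ = w ⟨j + t.1, by omega⟩) := by
    intro w
    rw [fct_eq w i hik, fct_eq w j hjk, List.ofFn_inj, funext_iff]
  rw [Finset.filter_congr (fun w _ => e w), ← Fintype.card_subtype]
  exact card_constr n k i j hij hjk

lemma card_filter_fct (n k i j : ℕ) (hij : i ≠ j) (hi : i + k ≤ n) (hj : j + k ≤ n) :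
    ((univ : Finset (Fin n → F)).filter fun w => fct k w i = fct k w j).card
      = Fintype.card F ^ (n - k) := by
  rcases hij.lt_or_gt with h | h
  · exact card_filter_fct_lt n k i j h hj
  · rw [Finset.filter_congr (fun w _ => eq_comm (a := fct k w i))]
    exact card_filter_fct_lt n k j i h hi

end

lemma E_eq {ι β : Type*} [DecidableEq ι] [DecidableEq β] (s : Finset ι) (f : ι → β) :
    ((s ×ˢ s).filter fun p => f p.1 = f p.2).card
      = ∑ b ∈ s.image f, ((s.filter fun a => f a = b).card) ^ 2 := by
  rw [Finset.card_filter, Finset.sum_product]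
  have h1 : ∀ i ∈ s, (∑ j ∈ s, if f i = f j then 1 else 0)
      = (s.filter fun a => f a = f i).card := by
    intro i _
    rw [Finset.card_filter]
    exact Finset.sum_congr rfl (fun j _ => by simp [eq_comm])
  rw [Finset.sum_congr rfl h1]
  rw [← Finset.sum_fiberwise_of_maps_to (fun x hx => Finset.mem_image_of_mem f hx)
    (fun a => (s.filter fun a' => f a' = f a).card)]
  refine Finset.sum_congr rfl (fun b hb => ?_)
  have h2 : ∀ a ∈ s.filter (fun a => f a = b),
      (s.filter fun a' => f a' = f a).card = (s.filter fun a' => f a' = b).card := by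
    intro a ha
    rw [(Finset.mem_filter.1 ha).2]
  rw [Finset.sum_congr rfl h2, Finset.sum_const, smul_eq_mul, sq]

lemma offdiag_split {ι β : Type*} [DecidableEq ι] [DecidableEq β] (s : Finset ι) (f : ι → β) :
    (s.offDiag.filter fun p => f p.1 = f p.2).card + s.card
      = ((s ×ˢ s).filter fun p => f p.1 = f p.2).card := by
  have key := Finset.card_filter_add_card_filter_not
    (s := (s ×ˢ s).filter fun p => f p.1 = f p.2) (p := fun p => p.1 ≠ p.2)
  rw [← key]
  congr 1
  · rw [Finset.filter_filter]
    congr 1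
    ext p
    simp only [Finset.mem_offDiag, Finset.mem_filter, Finset.mem_product]
    tauto
  · have : (((s ×ˢ s).filter fun p => f p.1 = f p.2).filter fun p => ¬ p.1 ≠ p.2) = s.diag := by
      ext p
      simp only [Finset.mem_filter, Finset.mem_product, Finset.mem_diag, not_not]
      constructor
      · rintro ⟨⟨⟨h1, _⟩, _⟩, h3⟩; exact ⟨h1, h3⟩
      · rintro ⟨h1, h2⟩; exact ⟨⟨⟨h1, h2 ▸ h1⟩, by rw [h2]⟩, h2⟩
    rw [this, Finset.diag_card]

lemma ten_le_pow (kk : ℕ) (h : 6 ≤ kk) : 10 * kk ≤ 2 ^ kk := by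
  induction kk with
  | zero => omega
  | succ m ih =>
    rcases Nat.lt_or_ge m 6 with hm | hm
    · interval_cases m <;> simp_all
    · have := ih (by omega)
      have : 2 ^ m ≥ 64 := by calc 2^m ≥ 2^6 := Nat.pow_le_pow_right (by norm_num) hm
                                  _ = 64 := by norm_num
      rw [pow_succ]
      omega

/-- Sum over all words of the number of coinciding off-diagonal factor pairs. -/
lemma sum_pairs {F : Type*} [Fintype F] [DecidableEq F] (n k : ℕ) (hk : k ≤ n) :
    ∑ w : Fin n → F, ((Finset.range (n - k + 1)).offDiag.filter
        fun p => fct k w p.1 = fct k w p.2).card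
      = ((n - k + 1) * (n - k + 1) - (n - k + 1)) * Fintype.card F ^ (n - k) := by
  simp only [Finset.card_filter]
  rw [Finset.sum_comm]
  have h1 : ∀ p ∈ (Finset.range (n - k + 1)).offDiag,
      (∑ w : Fin n → F, if fct k w p.1 = fct k w p.2 then 1 else 0)
        = Fintype.card F ^ (n - k) := by
    intro p hp
    rw [Finset.mem_offDiag] at hp
    obtain ⟨hp1, hp2, hp3⟩ := hp
    rw [Finset.mem_range] at hp1 hp2
    rw [← Finset.card_filter]
    exact card_filter_fct n k p.1 p.2 hp3 (by omega) (by omega)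
  rw [Finset.sum_congr rfl h1, Finset.sum_const, smul_eq_mul,
    Finset.offDiag_card, Finset.card_range]

theorem statement2 : ∃ N : ℕ, ∀ n : ℕ, N ≤ n →
    (2 : ℝ) ^ n / 16 ≤
      (Set.ncard {w : Fin n → ({0, 2} : Finset ℕ) |
        (n : ℝ) / 4 ≤ ((factorSet w (Nat.log 2 n)).card : ℝ)} : ℝ) := by
  classical
  use 64
  intro n hn
  set F := ({0, 2} : Finset ℕ)
  have hF : Fintype.card F = 2 := by rw [Fintype.card_coe]; rfl
  set k := Nat.log 2 n with hkdef
  have hk2 : 2 ^ k ≤ n := Nat.pow_log_le_self 2 (by omega)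
  have hlt : n < 2 ^ (k + 1) := Nat.lt_pow_succ_log_self (by norm_num) n
  have hk6 : 6 ≤ k := by
    rw [hkdef]
    exact (Nat.le_log_iff_pow_le (by norm_num) (by omega)).2 (by norm_num; omega)
  have h10 : 10 * k ≤ n := le_trans (ten_le_pow k hk6) hk2
  have hkn : k ≤ n := by omega
  set m := n - k + 1 with hmdef
  have hm1 : 1 ≤ m := by omega
  have hmn : m ≤ n := by omega
  have h9m : 9 * n ≤ 10 * m := by omega
  -- the predicate
  set p : (Fin n → F) → Prop :=
    fun w => (n : ℝ) / 4 ≤ ((factorSet w k).card : ℝ) with hp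
  set G := (univ : Finset (Fin n → F)).filter p with hG
  set B := (univ : Finset (Fin n → F)).filter (fun w => ¬ p w) with hB
  -- pairs
  set pr : (Fin n → F) → ℕ := fun w =>
    ((Finset.range m).offDiag.filter fun q => fct k w q.1 = fct k w q.2).card with hpr
  have hsum : ∑ w : Fin n → F, pr w = (m * m - m) * 2 ^ (n - k) := by
    rw [hpr]
    have := sum_pairs (F := F) n k hkn
    rw [hF] at this
    exact this
  -- lower bound for bad words
  have hbad : ∀ w ∈ B, (11 * (n : ℝ)) / 5 ≤ (pr w : ℝ) := by
    intro w hw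
    rw [hB, Finset.mem_filter] at hw
    have hC : ((factorSet w k).card : ℝ) < (n : ℝ) / 4 := by
      have := hw.2
      rw [hp] at this
      linarith [not_le.1 this]
    set s := Finset.range m with hs
    set f : ℕ → List F := fct k w with hf
    have hfs : factorSet w k = s.image f := rfl
    set C := (s.image f).card with hCdef
    set E := ((s ×ˢ s).filter fun q => f q.1 = f q.2).card with hE
    have hcs : ((m : ℝ)) ^ 2 ≤ (C : ℝ) * (E : ℝ) := by
      have h1 : (∑ b ∈ s.image f, (((s.filter fun a => f a = b).card : ℝ))) ^ 2
          ≤ (C : ℝ) * ∑ b ∈ s.image f, (((s.filter fun a => f a = b).card : ℝ)) ^ 2 :=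
        sq_sum_le_card_mul_sum_sq
      have h2 : ∑ b ∈ s.image f, (((s.filter fun a => f a = b).card : ℝ)) = (m : ℝ) := by
        rw_mod_cast [← Finset.card_eq_sum_card_fiberwise
          (fun x hx => Finset.mem_image_of_mem f hx)]
        simp [hs]
      have h3 : ∑ b ∈ s.image f, (((s.filter fun a => f a = b).card : ℝ)) ^ 2 = (E : ℝ) := by
        rw_mod_cast [← E_eq s f]
      rw [h2, h3] at h1
      exact h1
    have hsplit : pr w + m = E := by
      have := offdiag_split s f
      rw [Finset.card_range] at this
      exact this
    have hCE : (C : ℝ) < (n : ℝ) / 4 := by rw [hCdef, ← hfs]; exact hC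
    have hEeq : (E : ℝ) = (pr w : ℝ) + m := by
      rw [← hsplit]; push_cast; ring
    rw [hEeq] at hcs
    have hprm : (0 : ℝ) ≤ (pr w : ℝ) + m := add_nonneg (Nat.cast_nonneg _) (Nat.cast_nonneg _)
    have h4 : ((m : ℝ)) ^ 2 ≤ ((n : ℝ) / 4) * ((pr w : ℝ) + m) :=
      le_trans hcs (mul_le_mul_of_nonneg_right hCE.le hprm)
    have h5 : 4 * (n : ℝ) ^ 2 ≤ 5 * (m : ℝ) ^ 2 := by
      have : (9 : ℝ) * n ≤ 10 * m := by exact_mod_cast h9m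
      nlinarith
    have hmr : (m : ℝ) ≤ n := by exact_mod_cast hmn
    have hnr : (64 : ℝ) ≤ n := by exact_mod_cast hn
    have hN : (0 : ℝ) < n := by linarith
    nlinarith [Nat.cast_nonneg (α := ℝ) (pr w), mul_le_mul_of_nonneg_left hmr hN.le, hN]
  -- Markov
  have htot : (∑ w : Fin n → F, (pr w : ℝ)) ≤ 2 * n * 2 ^ n := by
    have h1 : ∑ w : Fin n → F, pr w ≤ 2 * n * 2 ^ n := by
      rw [hsum]
      calc (m * m - m) * 2 ^ (n - k) ≤ n * n * 2 ^ (n - k) := by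
            apply Nat.mul_le_mul_right
            have := Nat.mul_le_mul hmn hmn
            omega
        _ ≤ n * 2 ^ (k + 1) * 2 ^ (n - k) := by
            apply Nat.mul_le_mul_right
            exact Nat.mul_le_mul_left n hlt.le
        _ = 2 * n * 2 ^ n := by
            rw [mul_assoc, ← pow_add]
            have : k + 1 + (n - k) = n + 1 := by omega
            rw [this, pow_succ]
            ring
    calc (∑ w : Fin n → F, (pr w : ℝ)) = ((∑ w : Fin n → F, pr w : ℕ) : ℝ) := by push_cast; rfl
      _ ≤ ((2 * n * 2 ^ n : ℕ) : ℝ) := by exact_mod_cast h1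
      _ = 2 * n * 2 ^ n := by push_cast; ring
  have hBsum : (B.card : ℝ) * ((11 * (n : ℝ)) / 5) ≤ ∑ w : Fin n → F, (pr w : ℝ) := by
    calc (B.card : ℝ) * ((11 * (n : ℝ)) / 5) = ∑ _w ∈ B, (11 * (n : ℝ)) / 5 := by
          rw [Finset.sum_const, nsmul_eq_mul]
      _ ≤ ∑ w ∈ B, (pr w : ℝ) := Finset.sum_le_sum hbad
      _ ≤ ∑ w : Fin n → F, (pr w : ℝ) :=
          Finset.sum_le_sum_of_subset_of_nonneg (Finset.subset_univ B)
            (fun w _ _ => Nat.cast_nonneg _)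
  have hN : (0 : ℝ) < n := by
    have : (64 : ℝ) ≤ n := by exact_mod_cast hn
    linarith
  have hBcard : (B.card : ℝ) ≤ (10 / 11) * 2 ^ n := by
    have hpos : (0 : ℝ) < 11 * (n : ℝ) / 5 := by positivity
    rw [← mul_le_mul_iff_of_pos_right hpos]
    refine le_trans (hBsum.trans htot) (le_of_eq ?_)
    ring
  have hGB : G.card + B.card = 2 ^ n := by
    rw [hG, hB, Finset.card_filter_add_card_filter_not, Finset.card_univ,
      Fintype.card_fun, hF, Fintype.card_fin]
  have hGreal : (2 : ℝ) ^ n / 16 ≤ (G.card : ℝ) := by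
    have h2n : ((2 ^ n : ℕ) : ℝ) = (2 : ℝ) ^ n := by push_cast; ring
    have hGBr : (G.card : ℝ) + (B.card : ℝ) = (2 : ℝ) ^ n := by
      rw [← h2n]; exact_mod_cast congrArg (Nat.cast (R := ℝ)) hGB
    have hpow : (0 : ℝ) < (2 : ℝ) ^ n := by positivity
    linarith
  have hsetG : {w : Fin n → F | p w} = ↑G := by
    ext w
    simp [hG]
  rw [hsetG, Set.ncard_coe_finset]
  exact hGreal
end

section
/- Chung–Erdős inequality: Let (Ω,B,ν) be a probability space and (E_n) measurable sets with Σ ν(E_n) = ∞. Then ν(limsup E_n) ≥ limsup_{N→∞} (Σ_{n=1}^N ν(E_n))² / Σ_{1≤i≠j≤N} ν(E_i ∩ E_j). -/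
open MeasureTheory Filter
open scoped ENNReal Topology

lemma csL1 {Ω : Type*} [MeasurableSpace Ω] (ν : Measure Ω)
    (E : ℕ → Set Ω) (hE : ∀ n, MeasurableSet (E n)) (F : Finset ℕ) :
    (∑ n ∈ F, ν (E n)) ^ 2 ≤ ν (⋃ n ∈ F, E n) * ∑ i ∈ F, ∑ j ∈ F, ν (E i ∩ E j) := by
  classical
  set X : Ω → ℝ≥0∞ := fun ω => ∑ n ∈ F, (E n).indicator 1 ω with hX
  have hXm : Measurable X := by
    apply Finset.measurable_sum
    intro n _
    exact measurable_one.indicator (hE n)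
  set U : Set Ω := ⋃ n ∈ F, E n with hU
  have hUm : MeasurableSet U := by
    exact MeasurableSet.biUnion F.countable_toSet (fun n _ => hE n)
  have h1 : ∫⁻ ω, X ω ∂ν = ∑ n ∈ F, ν (E n) := by
    rw [lintegral_finset_sum _ (fun n _ => measurable_one.indicator (hE n))]
    exact Finset.sum_congr rfl fun n _ => lintegral_indicator_one (hE n)
  have h2 : ∫⁻ ω, X ω * X ω ∂ν = ∑ i ∈ F, ∑ j ∈ F, ν (E i ∩ E j) := by
    have : ∀ ω, X ω * X ω = ∑ i ∈ F, ∑ j ∈ F, (E i ∩ E j).indicator 1 ω := by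
      intro ω
      rw [hX]
      rw [Finset.sum_mul_sum]
      refine Finset.sum_congr rfl fun i _ => Finset.sum_congr rfl fun j _ => ?_
      rw [Set.inter_indicator_one]
      rfl
    simp_rw [this]
    rw [lintegral_finset_sum _ (fun i _ => Finset.measurable_sum _
      (fun j _ => measurable_one.indicator ((hE i).inter (hE j))))]
    refine Finset.sum_congr rfl fun i _ => ?_
    rw [lintegral_finset_sum _ (fun j _ => measurable_one.indicator ((hE i).inter (hE j)))]
    exact Finset.sum_congr rfl fun j _ => lintegral_indicator_one ((hE i).inter (hE j))
  have hXU : (fun ω => (X * U.indicator (1 : Ω → ℝ≥0∞)) ω) = X := by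
    funext ω
    show X ω * U.indicator 1 ω = X ω
    by_cases h : ω ∈ U
    · simp [Set.indicator_of_mem h]
    · have hz : X ω = 0 := by
        apply Finset.sum_eq_zero
        intro n hn
        have : ω ∉ E n := fun hc => h (Set.mem_biUnion hn hc)
        simp [Set.indicator_of_notMem this]
      simp [hz]
  have hconj : (2:ℝ).HolderConjugate 2 := ⟨by norm_num, by norm_num, by norm_num⟩
  have holder := ENNReal.lintegral_mul_le_Lp_mul_Lq ν hconj hXm.aemeasurable
    (measurable_one.indicator hUm).aemeasurable
  rw [lintegral_congr (fun a => congrFun hXU a)] at holder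
  have hg2 : ∫⁻ a, U.indicator (1 : Ω → ℝ≥0∞) a ^ (2:ℝ) ∂ν = ν U := by
    have : ∀ a, U.indicator (1 : Ω → ℝ≥0∞) a ^ (2:ℝ) = U.indicator 1 a := by
      intro a
      by_cases h : a ∈ U
      · simp [Set.indicator_of_mem h]
      · simp [Set.indicator_of_notMem h, ENNReal.zero_rpow_of_pos]
    simp_rw [this]
    exact lintegral_indicator_one hUm
  have hf2 : ∫⁻ a, X a ^ (2:ℝ) ∂ν = ∑ i ∈ F, ∑ j ∈ F, ν (E i ∩ E j) := by
    rw [← h2]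
    refine lintegral_congr fun a => ?_
    rw [show (2:ℝ) = ((2:ℕ):ℝ) by norm_num, ENNReal.rpow_natCast, pow_two]
  rw [h1, hf2, hg2] at holder
  have hsq := pow_le_pow_left₀ zero_le holder 2
  calc (∑ n ∈ F, ν (E n)) ^ 2
      ≤ ((∑ i ∈ F, ∑ j ∈ F, ν (E i ∩ E j)) ^ (1/(2:ℝ)) * ν U ^ (1/(2:ℝ))) ^ 2 := hsq
    _ = ν U * ∑ i ∈ F, ∑ j ∈ F, ν (E i ∩ E j) := by
        rw [mul_pow]
        rw [show ∀ x : ℝ≥0∞, (x ^ (1/(2:ℝ))) ^ (2:ℕ) = x by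
          intro x
          rw [← ENNReal.rpow_natCast (x ^ (1/(2:ℝ))) 2, ← ENNReal.rpow_mul]
          norm_num]
        rw [show ∀ x : ℝ≥0∞, (x ^ (1/(2:ℝ))) ^ (2:ℕ) = x by
          intro x
          rw [← ENNReal.rpow_natCast (x ^ (1/(2:ℝ))) 2, ← ENNReal.rpow_mul]
          norm_num]
        exact mul_comm _ _


lemma keyReal {c c' kk a t b d : ℝ} (hc : 0 ≤ c) (hcc : c < c') (hk : 0 ≤ kk)
    (hb : 0 ≤ b) (hbk : b ≤ kk) (ht : 0 ≤ t) (hd : 0 ≤ d) (hbd : b + d = a)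
    (hM : max 1 (max kk ((c + 2*kk)*c'/(c' - c) + 1)) ≤ a)
    (hct : c' * t ≤ a^2) : c * (t + a) ≤ d^2 := by
  have hc' : 0 < c' := lt_of_le_of_lt hc hcc
  have ha1 : (1:ℝ) ≤ a := le_trans (le_max_left _ _) hM
  have hak : kk ≤ a := le_trans (le_trans (le_max_left _ _) (le_max_right _ _)) hM
  have haM : (c + 2*kk)*c'/(c' - c) + 1 ≤ a :=
    le_trans (le_trans (le_max_right _ _) (le_max_right _ _)) hM
  have h1 : (c + 2*kk)*c' ≤ a * (c' - c) := by
    rw [← div_le_iff₀ (by linarith : (0:ℝ) < c' - c)] at *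
    linarith
  have h2 : a - kk ≤ d := by linarith
  have h3 : c * (c' * t) ≤ c * a^2 := by nlinarith
  have h4 : (a - kk)^2 ≤ d^2 := pow_le_pow_left₀ (by linarith) h2 2
  have h5 : a * ((c + 2*kk)*c') ≤ a * (a * (c' - c)) :=
    mul_le_mul_of_nonneg_left (by nlinarith) (by linarith)
  nlinarith [mul_nonneg (mul_nonneg hc'.le hk) hk, mul_pos hc' (by linarith : (0:ℝ) < a), mul_le_mul_of_nonneg_left h4 hc'.le]


/-- The Chung–Erdős inequality: if `(Ω, ν)` is a probability space and `(E_n)` are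
measurable sets with `∑ ν(E_n) = ∞`, then
`ν(limsup E_n) ≥ limsup_N (∑_{n<N} ν(E_n))² / ∑_{i ≠ j < N} ν(E_i ∩ E_j)`. -/
theorem statement16 {Ω : Type*} [MeasurableSpace Ω] (ν : Measure Ω)
    [IsProbabilityMeasure ν] (E : ℕ → Set Ω) (hE : ∀ n, MeasurableSet (E n))
    (hdiv : ∑' n, ν (E n) = ⊤) :
    limsup (fun N : ℕ =>
        (∑ n ∈ Finset.range N, ν (E n)) ^ 2 /
          ∑ i ∈ Finset.range N, ∑ j ∈ Finset.range N,
            if i = j then 0 else ν (E i ∩ E j)) atTop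
      ≤ ν (limsup E atTop) := by
  classical
  set S : ℕ → ℝ≥0∞ := fun N => ∑ n ∈ Finset.range N, ν (E n) with hS
  set T : ℕ → ℝ≥0∞ := fun N => ∑ i ∈ Finset.range N, ∑ j ∈ Finset.range N,
      if i = j then 0 else ν (E i ∩ E j) with hT
  set A : ℕ → Set Ω := fun k => ⋃ n, ⋃ (_ : k ≤ n), E n with hA
  by_contra hcon
  push_neg at hcon
  obtain ⟨c, hc1, hc2⟩ := exists_between hcon
  obtain ⟨c', hcc', hc'2⟩ := exists_between hc2
  have hcT : c ≠ ⊤ := hcc'.ne_top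
  have hc'T : c' ≠ ⊤ := hc'2.ne_top
  set cR : ℝ := c.toReal with hcR
  set c'R : ℝ := c'.toReal with hc'R
  have hcc : cR < c'R := (ENNReal.toReal_lt_toReal hcT hc'T).mpr hcc'
  have hc0 : (0:ℝ) ≤ cR := ENNReal.toReal_nonneg
  -- tail sets facts
  have hAm : ∀ k, MeasurableSet (A k) := fun k =>
    MeasurableSet.iUnion fun n => MeasurableSet.iUnion fun _ => hE n
  have hAanti : Antitone A := by
    intro i j hij
    exact Set.iUnion₂_subset fun n hn => Set.subset_iUnion₂ (s := fun n _ => E n) n (hij.trans hn)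
  -- S tends to ∞
  have hStop : Tendsto S atTop (𝓝 ⊤) := by
    have := ENNReal.tendsto_nat_tsum (fun n => ν (E n))
    rwa [hdiv] at this
  -- finiteness
  have hSne : ∀ N, S N ≠ ⊤ := fun N =>
    ENNReal.sum_ne_top.mpr fun n _ => measure_ne_top ν _
  have hTne : ∀ N, T N ≠ ⊤ := fun N =>
    ENNReal.sum_ne_top.mpr fun i _ => ENNReal.sum_ne_top.mpr fun j _ => by
      split <;> simp [measure_ne_top]
  -- main claim
  have key : ∀ k, c ≤ ν (A k) := by
    intro k
    set kR : ℝ := (k : ℝ) with hkR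
    set M : ℝ := max 1 (max kR ((cR + 2*kR)*c'R/(c'R - cR) + 1)) with hM
    have hev : ∀ᶠ N in atTop, ENNReal.ofReal M < S N :=
      (tendsto_order.1 hStop).1 _ ENNReal.ofReal_lt_top
    have hev2 : ∀ᶠ N in atTop, k ≤ N := eventually_ge_atTop k
    have hfreq : ∃ᶠ N in atTop, c' < S N ^ 2 / T N := frequently_lt_of_lt_limsup (by isBoundedDefault) hc'2
    obtain ⟨N, hNc, hNk, hNM⟩ := (hfreq.and_eventually (hev2.and hev)).exists
    set D : ℝ≥0∞ := ∑ n ∈ Finset.Ico k N, ν (E n) with hD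
    have hBD : S k + D = S N := by
      rw [hS, hD]
      simp only [Finset.range_eq_Ico]
      exact Finset.sum_Ico_consecutive _ (Nat.zero_le k) hNk
    have hDne : D ≠ ⊤ := ne_top_of_le_ne_top (hSne N) (hBD ▸ le_add_self)
    -- the full double sum equals T N + S N
    have hFull : ∑ i ∈ Finset.range N, ∑ j ∈ Finset.range N, ν (E i ∩ E j) = T N + S N := by
      rw [hT, hS, ← Finset.sum_add_distrib]
      refine Finset.sum_congr rfl fun i hi => ?_
      calc ∑ j ∈ Finset.range N, ν (E i ∩ E j)
          = ∑ j ∈ Finset.range N, ((if i = j then 0 else ν (E i ∩ E j)) +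
              (if i = j then ν (E i ∩ E j) else 0)) :=
            Finset.sum_congr rfl fun j _ => by split <;> simp
        _ = (∑ j ∈ Finset.range N, if i = j then 0 else ν (E i ∩ E j)) +
              ∑ j ∈ Finset.range N, if i = j then ν (E i ∩ E j) else 0 :=
            Finset.sum_add_distrib
        _ = (∑ j ∈ Finset.range N, if i = j then 0 else ν (E i ∩ E j)) + ν (E i) := by
            rw [Finset.sum_ite_eq _ i (fun j => ν (E i ∩ E j)), if_pos hi, Set.inter_self]
    -- Cauchy-Schwarz over Ico k N
    have hCS := csL1 ν E hE (Finset.Ico k N)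
    have hsub : Finset.Ico k N ⊆ Finset.range N := by
      rw [Finset.range_eq_Ico]; exact Finset.Ico_subset_Ico (Nat.zero_le k) le_rfl
    have hmono : ∑ i ∈ Finset.Ico k N, ∑ j ∈ Finset.Ico k N, ν (E i ∩ E j)
        ≤ T N + S N := by
      rw [← hFull]
      calc ∑ i ∈ Finset.Ico k N, ∑ j ∈ Finset.Ico k N, ν (E i ∩ E j)
          ≤ ∑ i ∈ Finset.Ico k N, ∑ j ∈ Finset.range N, ν (E i ∩ E j) :=
            Finset.sum_le_sum fun i _ =>
              Finset.sum_le_sum_of_subset_of_nonneg hsub (fun _ _ _ => zero_le)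
        _ ≤ ∑ i ∈ Finset.range N, ∑ j ∈ Finset.range N, ν (E i ∩ E j) :=
            Finset.sum_le_sum_of_subset_of_nonneg hsub (fun _ _ _ => zero_le)
    have hUsub : ν (⋃ n ∈ Finset.Ico k N, E n) ≤ ν (A k) := by
      refine measure_mono (Set.iUnion₂_subset fun n hn => ?_)
      exact Set.subset_iUnion₂ (s := fun n _ => E n) n (Finset.mem_Ico.mp hn).1
    -- positivity/finiteness of denominator
    have hSpos : 0 < S N := lt_of_le_of_lt zero_le hNM
    have hden0 : T N + S N ≠ 0 := (lt_of_lt_of_le hSpos le_add_self).ne'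
    have hdenT : T N + S N ≠ ⊤ := ENNReal.add_ne_top.mpr ⟨hTne N, hSne N⟩
    -- core numeric inequality
    have hmulTS : c' * T N ≤ S N ^ 2 := by
      by_cases hT0 : T N = 0
      · simp [hT0]
      · exact (ENNReal.le_div_iff_mul_le (Or.inl hT0) (Or.inl (hTne N))).mp hNc.le
    have hcore : c * (T N + S N) ≤ D ^ 2 := by
      rw [← ENNReal.toReal_le_toReal (ENNReal.mul_ne_top hcT hdenT)
        (ENNReal.pow_ne_top hDne)]
      rw [ENNReal.toReal_mul, ENNReal.toReal_add (hTne N) (hSne N), ENNReal.toReal_pow]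
      refine keyReal (b := (S k).toReal) hc0 hcc (Nat.cast_nonneg k) ENNReal.toReal_nonneg ?_
        ENNReal.toReal_nonneg ENNReal.toReal_nonneg ?_ ?_ ?_
      · -- (S k).toReal ≤ kR
        have h1 : S k ≤ (k : ℝ≥0∞) := by
          rw [hS]
          calc ∑ n ∈ Finset.range k, ν (E n) ≤ ∑ _n ∈ Finset.range k, 1 :=
              Finset.sum_le_sum fun n _ => prob_le_one
            _ = (k : ℝ≥0∞) := by simp
        have := ENNReal.toReal_mono (ENNReal.natCast_ne_top k) h1
        simpa using this
      · -- b + d = a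
        rw [← ENNReal.toReal_add (ne_top_of_le_ne_top (hSne N) (hBD ▸ le_self_add)) hDne, hBD]
      · -- M ≤ (S N).toReal
        exact ((ENNReal.ofReal_le_iff_le_toReal (hSne N)).mp hNM.le)
      · -- c'R * t ≤ a^2
        have := ENNReal.toReal_mono (ENNReal.pow_ne_top (hSne N)) hmulTS
        rwa [ENNReal.toReal_mul, ENNReal.toReal_pow] at this
    calc c ≤ D ^ 2 / (T N + S N) :=
        (ENNReal.le_div_iff_mul_le (Or.inl hden0) (Or.inl hdenT)).mpr hcore
      _ ≤ D ^ 2 / ∑ i ∈ Finset.Ico k N, ∑ j ∈ Finset.Ico k N, ν (E i ∩ E j) :=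
        ENNReal.div_le_div_left hmono _
      _ ≤ ν (⋃ n ∈ Finset.Ico k N, E n) := ENNReal.div_le_of_le_mul hCS
      _ ≤ ν (A k) := hUsub
  -- conclude
  have hlim : Tendsto (fun k => ν (A k)) atTop (𝓝 (ν (⋂ k, A k))) :=
    tendsto_measure_iInter_atTop (fun k => (hAm k).nullMeasurableSet) hAanti
      ⟨0, measure_ne_top ν _⟩
  have hIA : ν (limsup E atTop) = ν (⋂ k, A k) := by
    congr 1
    rw [limsup_eq_iInf_iSup_of_nat]
    simp only [hA, Set.iInf_eq_iInter, Set.iSup_eq_iUnion]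
  have : c ≤ ν (limsup E atTop) := by
    rw [hIA]
    exact ge_of_tendsto' hlim key
  exact absurd (lt_of_le_of_lt this hc1) (lt_irrefl c)
end

section
/- Convergence part: Let ψ: ℝ⁺ → ℝ⁺ be non-increasing and suppose Σ_{n≥1} n·(3^n ψ(3^n))^γ < ∞ where γ = log 2/log 3. Then μ-almost no x in the Cantor set K satisfies |x − p/q| < ψ(q_int) for infinitely many rationals p/q ∈ K, i.e., μ(W_int(ψ)) = 0. -/
open Finset

/-- The middle-third Cantor set: the set of reals admitting a ternary expansion
with all digits in `{0, 2}`. -/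
def cantorSetK : Set ℝ :=
  {x | ∃ a : ℕ → ℕ, (∀ i, a i = 0 ∨ a i = 2) ∧ x = ∑' i : ℕ, (a i : ℝ) / 3 ^ (i + 1)}

/-- The real number with ternary digit sequence `a` (digit `a i` at place `i + 1`). -/
noncomputable def ternaryExpansion (a : ℕ → ℕ) : ℝ := ∑' i : ℕ, (a i : ℝ) / 3 ^ (i + 1)

/-- `[a_1, …, a_n] = ∑_{i=1}^n a_i / 3 ^ i` for a finite block of digits. -/
noncomputable def tern {n : ℕ} (a : Fin n → ℕ) : ℝ :=
  ∑ i : Fin n, (a i : ℝ) / 3 ^ ((i : ℕ) + 1)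

/-- The set of `l` such that the tail `(a_i)_{i ≥ l}` of the digit sequence `a`
is purely periodic (of some period `m ≥ 1`).  Its least element is the prelength. -/
def preSet (a : ℕ → ℕ) : Set ℕ := {l | ∃ m, 1 ≤ m ∧ ∀ i, l ≤ i → a (i + m) = a i}

/-- The set of periods `m ≥ 1` of the tail `(a_i)_{i ≥ ℓ}` of the digit sequence `a`.
Its least element is the (minimal) period. -/
def perSet (a : ℕ → ℕ) (ℓ : ℕ) : Set ℕ := {m | 1 ≤ m ∧ ∀ i, ℓ ≤ i → a (i + m) = a i}

/-- The intrinsic numerator `p_int = 3^{ℓ+m}[ε_1,…,ε_{ℓ+m}] − 3^ℓ[ε_1,…,ε_ℓ]`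
of a rational with digit sequence `a`, prelength `ℓ` and period `m`. -/
def pInt (a : ℕ → ℕ) (ℓ m : ℕ) : ℤ :=
  (∑ i ∈ Finset.range (ℓ + m), (a i : ℤ) * 3 ^ (ℓ + m - 1 - i)) -
    ∑ i ∈ Finset.range ℓ, (a i : ℤ) * 3 ^ (ℓ - 1 - i)

open MeasureTheory

/-! ### Auxiliary material for the proof -/

set_option linter.unusedSectionVars false

section Aux

noncomputable def γ₀ : ℝ := Real.log 2 / Real.log 3

lemma gamma_pos : 0 < γ₀ := div_pos (Real.log_pos one_lt_two) (Real.log_pos (by norm_num))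

lemma gamma_nonneg : 0 ≤ γ₀ := le_of_lt gamma_pos

lemma gamma_lt_one : γ₀ < 1 := by
  rw [γ₀, div_lt_one (Real.log_pos (by norm_num))]
  exact Real.log_lt_log (by norm_num) (by norm_num)

lemma rpow_three_pow (j : ℕ) : ((3:ℝ) ^ j) ^ γ₀ = 2 ^ j := by
  rw [← Real.rpow_natCast (3:ℝ) j, ← Real.rpow_natCast (2:ℝ) j,
    ← Real.rpow_mul (by norm_num)]
  rw [Real.rpow_def_of_pos (by norm_num : (0:ℝ) < 3),
    Real.rpow_def_of_pos (by norm_num : (0:ℝ) < 2)]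
  congr 1
  have h3 : Real.log 3 ≠ 0 := ne_of_gt (Real.log_pos (by norm_num))
  rw [γ₀]
  field_simp

lemma rpow_third_pow (j : ℕ) : ((1/3:ℝ) ^ j) ^ γ₀ = (1/2) ^ j := by
  have h1 : ((1/3:ℝ) ^ j) = ((3:ℝ) ^ j)⁻¹ := by
    rw [one_div, inv_pow]
  rw [h1, Real.inv_rpow (by positivity), rpow_three_pow, one_div, inv_pow]

-- half cancellation
lemma halfCancel {a b : ENNReal} (ha : a ≠ ⊤) (h : a = 2⁻¹ * a + 2⁻¹ * b) (hb : b = 0) :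
    a = 0 := by
  rw [hb, mul_zero, add_zero] at h
  have ht := congrArg ENNReal.toReal h
  rw [ENNReal.toReal_mul] at ht
  have hh : ((2:ENNReal)⁻¹).toReal = 1/2 := by
    rw [ENNReal.toReal_inv]; norm_num
  rw [hh] at ht
  have h0 : a.toReal = 0 := by linarith
  rcases (ENNReal.toReal_eq_zero_iff a).1 h0 with h1 | h1
  · exact h1
  · exact absurd h1 ha

def recon (ℓ m : ℕ) (b : ℕ → ℕ) : ℕ → ℕ := fun i => if i < ℓ then b i else b (ℓ + (i - ℓ) % m)

lemma recon_eq_self (a : ℕ → ℕ) (ℓ m : ℕ) (hm : 1 ≤ m)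
    (hp : ∀ i, ℓ ≤ i → a (i + m) = a i) : recon ℓ m a = a := by
  have claim : ∀ j : ℕ, a (ℓ + j % m) = a (ℓ + j) := by
    intro j
    induction j using Nat.strong_induction_on with
    | _ j ih =>
      rcases lt_or_ge j m with hj | hj
      · rw [Nat.mod_eq_of_lt hj]
      · have h1 : j % m = (j - m) % m := by
          conv_lhs => rw [← Nat.sub_add_cancel hj]
          rw [Nat.add_mod_right]
        rw [h1, ih (j - m) (by omega)]
        have h2 : ℓ + j = (ℓ + (j - m)) + m := by omega
        rw [h2, hp _ (by omega)]
  funext i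
  unfold recon
  split_ifs with h
  · rfl
  · rw [claim (i - ℓ)]
    congr 1
    omega

lemma recon_congr (ℓ m : ℕ) (hm : 1 ≤ m) (b b' : ℕ → ℕ)
    (h : ∀ i, i < ℓ + m → b i = b' i) : recon ℓ m b = recon ℓ m b' := by
  funext i
  unfold recon
  split_ifs with h'
  · exact h i (by omega)
  · exact h _ (by have := Nat.mod_lt (i - ℓ) hm; omega)

/-- center of a ball indexed by block length `n`, prelength `ℓ` and digit pattern `d`. -/
noncomputable def ctr (n ℓ : ℕ) (d : Fin n → Bool) : ℝ :=
  ternaryExpansion (recon ℓ (n - ℓ) (fun i => if h : i < n then (if d ⟨i, h⟩ then 2 else 0) else 0))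

lemma ctr_eq (a : ℕ → ℕ) (ℓ m : ℕ) (hd : ∀ i, a i = 0 ∨ a i = 2) (hm : 1 ≤ m)
    (hp : ∀ i, ℓ ≤ i → a (i + m) = a i) :
    ctr (ℓ + m) ℓ (fun i => decide (a (i : ℕ) = 2)) = ternaryExpansion a := by
  unfold ctr
  congr 1
  have hmm : ℓ + m - ℓ = m := by omega
  rw [hmm]
  rw [recon_congr ℓ m hm _ a ?_, recon_eq_self a ℓ m hm hp]
  intro i hi
  rw [dif_pos hi]
  rcases hd i with h0 | h2
  · simp [h0]
  · simp [h2]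

variable (μ : Measure ℝ) [IsProbabilityMeasure μ]
    (hself : μ = (2⁻¹ : ENNReal) • μ.map (fun x : ℝ => x / 3) +
      (2⁻¹ : ENNReal) • μ.map (fun x : ℝ => x / 3 + 2 / 3))

include hself

lemma keyId (A : Set ℝ) (hA : MeasurableSet A) :
    μ A = 2⁻¹ * μ ((fun x : ℝ => x / 3) ⁻¹' A) + 2⁻¹ * μ ((fun x : ℝ => x / 3 + 2/3) ⁻¹' A) := by
  conv_lhs => rw [hself]
  rw [Measure.add_apply, Measure.smul_apply, Measure.smul_apply,
    Measure.map_apply (by fun_prop) hA, Measure.map_apply (by fun_prop) hA,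
    smul_eq_mul, smul_eq_mul]

lemma keyIcc (a b : ℝ) :
    μ (Set.Icc a b) = 2⁻¹ * μ (Set.Icc (3*a) (3*b)) + 2⁻¹ * μ (Set.Icc (3*a-2) (3*b-2)) := by
  have h := keyId μ hself (Set.Icc a b) measurableSet_Icc
  have e1 : (fun x : ℝ => x / 3) ⁻¹' Set.Icc a b = Set.Icc (3*a) (3*b) := by
    ext x; simp only [Set.mem_preimage, Set.mem_Icc]
    constructor <;> intro h <;> exact ⟨by linarith [h.1, h.2], by linarith [h.1, h.2]⟩
  have e2 : (fun x : ℝ => x / 3 + 2/3) ⁻¹' Set.Icc a b = Set.Icc (3*a-2) (3*b-2) := by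
    ext x; simp only [Set.mem_preimage, Set.mem_Icc]
    constructor <;> intro h <;> exact ⟨by linarith [h.1, h.2], by linarith [h.1, h.2]⟩
  rwa [e1, e2] at h

lemma keyIio (c : ℝ) :
    μ (Set.Iio c) = 2⁻¹ * μ (Set.Iio (3*c)) + 2⁻¹ * μ (Set.Iio (3*c-2)) := by
  have h := keyId μ hself (Set.Iio c) measurableSet_Iio
  have e1 : (fun x : ℝ => x / 3) ⁻¹' Set.Iio c = Set.Iio (3*c) := by
    ext x; simp only [Set.mem_preimage, Set.mem_Iio]
    constructor <;> intro h <;> linarith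
  have e2 : (fun x : ℝ => x / 3 + 2/3) ⁻¹' Set.Iio c = Set.Iio (3*c-2) := by
    ext x; simp only [Set.mem_preimage, Set.mem_Iio]
    constructor <;> intro h <;> linarith
  rwa [e1, e2] at h

lemma keyIoi (c : ℝ) :
    μ (Set.Ioi c) = 2⁻¹ * μ (Set.Ioi (3*c)) + 2⁻¹ * μ (Set.Ioi (3*c-2)) := by
  have h := keyId μ hself (Set.Ioi c) measurableSet_Ioi
  have e1 : (fun x : ℝ => x / 3) ⁻¹' Set.Ioi c = Set.Ioi (3*c) := by
    ext x; simp only [Set.mem_preimage, Set.mem_Ioi]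
    constructor <;> intro h <;> linarith
  have e2 : (fun x : ℝ => x / 3 + 2/3) ⁻¹' Set.Ioi c = Set.Ioi (3*c-2) := by
    ext x; simp only [Set.mem_preimage, Set.mem_Ioi]
    constructor <;> intro h <;> linarith
  rwa [e1, e2] at h

lemma keySingleton (c : ℝ) :
    μ {c} = 2⁻¹ * μ {3*c} + 2⁻¹ * μ {3*c-2} := by
  have h := keyId μ hself {c} (measurableSet_singleton c)
  have e1 : (fun x : ℝ => x / 3) ⁻¹' {c} = {(3*c : ℝ)} := by
    ext x; simp only [Set.mem_preimage, Set.mem_singleton_iff]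
    constructor <;> intro h <;> linarith
  have e2 : (fun x : ℝ => x / 3 + 2/3) ⁻¹' {c} = {(3*c-2 : ℝ)} := by
    ext x; simp only [Set.mem_preimage, Set.mem_singleton_iff]
    constructor <;> intro h <;> linarith
  rwa [e1, e2] at h

lemma Iio_neg_zero (c : ℝ) (hc : c < 0) : μ (Set.Iio c) = 0 := by
  have step : ∀ d : ℝ, d ≤ 0 → μ (Set.Iio d) = μ (Set.Iio (3*d)) := by
    intro d hd
    have h := keyIio μ hself d
    have h1 : μ (Set.Iio (3*d-2)) ≤ μ (Set.Iio (3*d)) :=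
      measure_mono (Set.Iio_subset_Iio (by linarith))
    have h2 : μ (Set.Iio (3*d)) ≤ μ (Set.Iio d) :=
      measure_mono (Set.Iio_subset_Iio (by linarith))
    refine le_antisymm ?_ h2
    calc μ (Set.Iio d) = 2⁻¹ * μ (Set.Iio (3*d)) + 2⁻¹ * μ (Set.Iio (3*d-2)) := h
      _ ≤ 2⁻¹ * μ (Set.Iio (3*d)) + 2⁻¹ * μ (Set.Iio (3*d)) := by gcongr
      _ = (2⁻¹ + 2⁻¹) * μ (Set.Iio (3*d)) := by ring
      _ = μ (Set.Iio (3*d)) := by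
          have hone : (2⁻¹ + 2⁻¹ : ENNReal) = 1 := by
            rw [← two_mul]
            exact ENNReal.mul_inv_cancel (by norm_num) (by norm_num)
          rw [hone, one_mul]
  have iter : ∀ n : ℕ, μ (Set.Iio c) = μ (Set.Iio (3^n * c)) := by
    intro n
    induction n with
    | zero => simp
    | succ n ih =>
      rw [ih, step (3^n * c) (by nlinarith [pow_pos (by norm_num : (0:ℝ) < 3) n])]
      ring_nf
  have hanti : Antitone (fun n : ℕ => Set.Iio ((3:ℝ)^n * c)) := by
    intro n m hnm
    apply Set.Iio_subset_Iio
    have : (3:ℝ)^n ≤ 3^m := pow_le_pow_right₀ (by norm_num) hnm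
    nlinarith
  have hempty : ⋂ n : ℕ, Set.Iio ((3:ℝ)^n * c) = ∅ := by
    ext x
    simp only [Set.mem_iInter, Set.mem_Iio, Set.mem_empty_iff_false, iff_false, not_forall, not_lt]
    obtain ⟨n, hn⟩ := pow_unbounded_of_one_lt (x / c) (by norm_num : (1:ℝ) < 3)
    exact ⟨n, by rw [div_lt_iff_of_neg hc] at hn; linarith⟩
  have ht := tendsto_measure_iInter_atTop (μ := μ)
    (fun n => (measurableSet_Iio).nullMeasurableSet) hanti ⟨0, measure_ne_top μ _⟩
  rw [hempty, measure_empty] at ht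
  have hconst : (μ ∘ fun n : ℕ => Set.Iio ((3:ℝ)^n * c)) = fun _ => μ (Set.Iio c) := by
    funext n; exact (iter n).symm
  rw [hconst] at ht
  exact tendsto_nhds_unique tendsto_const_nhds ht

lemma Iio_zero : μ (Set.Iio 0) = 0 := by
  have h := keyIio μ hself 0
  norm_num at h
  exact halfCancel (measure_ne_top μ _) h (Iio_neg_zero μ hself (-2) (by norm_num))

lemma Ioi_gt_one (c : ℝ) (hc : 1 < c) : μ (Set.Ioi c) = 0 := by
  have step : ∀ d : ℝ, 1 ≤ d → μ (Set.Ioi d) = μ (Set.Ioi (3*d-2)) := by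
    intro d hd
    have h := keyIoi μ hself d
    have h1 : μ (Set.Ioi (3*d)) ≤ μ (Set.Ioi (3*d-2)) :=
      measure_mono (Set.Ioi_subset_Ioi (by linarith))
    have h2 : μ (Set.Ioi (3*d-2)) ≤ μ (Set.Ioi d) :=
      measure_mono (Set.Ioi_subset_Ioi (by linarith))
    refine le_antisymm ?_ h2
    calc μ (Set.Ioi d) = 2⁻¹ * μ (Set.Ioi (3*d)) + 2⁻¹ * μ (Set.Ioi (3*d-2)) := h
      _ ≤ 2⁻¹ * μ (Set.Ioi (3*d-2)) + 2⁻¹ * μ (Set.Ioi (3*d-2)) := by gcongr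
      _ = (2⁻¹ + 2⁻¹) * μ (Set.Ioi (3*d-2)) := by ring
      _ = μ (Set.Ioi (3*d-2)) := by
          have hone : (2⁻¹ + 2⁻¹ : ENNReal) = 1 := by
            rw [← two_mul]
            exact ENNReal.mul_inv_cancel (by norm_num) (by norm_num)
          rw [hone, one_mul]
  have iter : ∀ n : ℕ, μ (Set.Ioi c) = μ (Set.Ioi ((3:ℝ)^n * (c-1) + 1)) := by
    intro n
    induction n with
    | zero => simp
    | succ n ih =>
      rw [ih, step ((3:ℝ)^n * (c-1) + 1)
        (by nlinarith [pow_pos (by norm_num : (0:ℝ) < 3) n])]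
      have he : 3 * ((3:ℝ)^n * (c-1) + 1) - 2 = 3^(n+1)*(c-1)+1 := by ring
      rw [he]
  have hanti : Antitone (fun n : ℕ => Set.Ioi ((3:ℝ)^n * (c-1) + 1)) := by
    intro n m hnm
    apply Set.Ioi_subset_Ioi
    have : (3:ℝ)^n ≤ 3^m := pow_le_pow_right₀ (by norm_num) hnm
    nlinarith
  have hempty : ⋂ n : ℕ, Set.Ioi ((3:ℝ)^n * (c-1) + 1) = ∅ := by
    ext x
    simp only [Set.mem_iInter, Set.mem_Ioi, Set.mem_empty_iff_false, iff_false, not_forall, not_lt]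
    obtain ⟨n, hn⟩ := pow_unbounded_of_one_lt ((x-1) / (c-1)) (by norm_num : (1:ℝ) < 3)
    refine ⟨n, ?_⟩
    rw [div_lt_iff₀ (by linarith)] at hn
    nlinarith
  have ht := tendsto_measure_iInter_atTop (μ := μ)
    (fun n => (measurableSet_Ioi).nullMeasurableSet) hanti ⟨0, measure_ne_top μ _⟩
  rw [hempty, measure_empty] at ht
  have hconst : (μ ∘ fun n : ℕ => Set.Ioi ((3:ℝ)^n * (c-1) + 1)) = fun _ => μ (Set.Ioi c) := by
    funext n; exact (iter n).symm
  rw [hconst] at ht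
  exact tendsto_nhds_unique tendsto_const_nhds ht

lemma Ioi_one : μ (Set.Ioi 1) = 0 := by
  have h := keyIoi μ hself 1
  norm_num at h
  rw [add_comm] at h
  exact halfCancel (measure_ne_top μ _) h (Ioi_gt_one μ hself 3 (by norm_num))

lemma sing_one : μ {(1:ℝ)} = 0 := by
  have h := keySingleton μ hself 1
  norm_num at h
  rw [add_comm] at h
  have h3 : μ {(3:ℝ)} = 0 :=
    measure_mono_null (by intro x hx; simp only [Set.mem_singleton_iff] at hx; simp [hx]) (Ioi_one μ hself)
  exact halfCancel (measure_ne_top μ _) h h3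

lemma sing_zero : μ {(0:ℝ)} = 0 := by
  have h := keySingleton μ hself 0
  norm_num at h
  have h2 : μ {(-2:ℝ)} = 0 :=
    measure_mono_null (by intro x hx; simp only [Set.mem_singleton_iff] at hx; simp [hx]) (Iio_zero μ hself)
  exact halfCancel (measure_ne_top μ _) h h2

lemma Iic_zero : μ (Set.Iic 0) = 0 := by
  have : Set.Iic (0:ℝ) = Set.Iio 0 ∪ {0} := by
    ext x; simp [le_iff_lt_or_eq]
  rw [this]
  exact measure_union_null (Iio_zero μ hself) (sing_zero μ hself)

lemma Ici_one : μ (Set.Ici 1) = 0 := by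
  have : Set.Ici (1:ℝ) = {1} ∪ Set.Ioi 1 := by
    ext x; simp [le_iff_lt_or_eq, or_comm]
  rw [this]
  exact measure_union_null (sing_one μ hself) (Ioi_one μ hself)

lemma mid_zero (a b : ℝ) (ha : 1/3 ≤ a) (hb : b ≤ 2/3) : μ (Set.Icc a b) = 0 := by
  rw [keyIcc μ hself a b]
  have h1 : μ (Set.Icc (3*a) (3*b)) = 0 :=
    measure_mono_null (fun x hx => by simp only [Set.mem_Icc] at hx; simp only [Set.mem_Ici]; linarith [hx.1])
      (Ici_one μ hself)
  have h2 : μ (Set.Icc (3*a-2) (3*b-2)) = 0 :=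
    measure_mono_null (fun x hx => by simp only [Set.mem_Icc] at hx; simp only [Set.mem_Iic]; linarith [hx.2])
      (Iic_zero μ hself)
  rw [h1, h2]
  simp

lemma left_zero (a b : ℝ) (hb : b ≤ 1/3) : μ (Set.Icc a b) = 2⁻¹ * μ (Set.Icc (3*a) (3*b)) := by
  rw [keyIcc μ hself a b]
  have h2 : μ (Set.Icc (3*a-2) (3*b-2)) = 0 :=
    measure_mono_null (fun x hx => by simp only [Set.mem_Icc] at hx; simp only [Set.mem_Iic]; linarith [hx.2])
      (Iic_zero μ hself)
  rw [h2, mul_zero, add_zero]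

lemma right_zero (a b : ℝ) (ha : 2/3 ≤ a) : μ (Set.Icc a b) = 2⁻¹ * μ (Set.Icc (3*a-2) (3*b-2)) := by
  rw [keyIcc μ hself a b]
  have h1 : μ (Set.Icc (3*a) (3*b)) = 0 :=
    measure_mono_null (fun x hx => by simp only [Set.mem_Icc] at hx; simp only [Set.mem_Ici]; linarith [hx.1])
      (Ici_one μ hself)
  rw [h1, mul_zero, zero_add]

lemma interval_bound : ∀ k : ℕ, ∀ a b : ℝ, b - a ≤ (1/3)^k →
    μ (Set.Icc a b) ≤ 2 * (2⁻¹ : ENNReal)^k := by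
  intro k
  induction k with
  | zero =>
    intro a b _
    calc μ (Set.Icc a b) ≤ 1 := prob_le_one
      _ ≤ 2 * (2⁻¹ : ENNReal)^0 := by norm_num
  | succ k ih =>
    intro a b hab
    have hstep : ((1:ℝ)/3)^(k+1) ≤ (1/3)^k := by
      apply pow_le_pow_of_le_one (by norm_num) (by norm_num) (by omega)
    have hgoal : 2⁻¹ * (2 * (2⁻¹ : ENNReal)^k) = 2 * (2⁻¹)^(k+1) := by ring
    rcases le_or_gt b (1/3) with hb | hb
    · rw [left_zero μ hself a b hb]
      rw [← hgoal]
      gcongr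
      exact ih (3*a) (3*b) (by rw [pow_succ] at hab; nlinarith)
    rcases le_or_gt (2/3) a with ha | ha
    · rw [right_zero μ hself a b ha]
      rw [← hgoal]
      gcongr
      exact ih (3*a-2) (3*b-2) (by rw [pow_succ] at hab; nlinarith)
    rcases le_or_gt a (1/3) with ha13 | ha13
    · have hb23 : b ≤ 2/3 := by
        have h13 : ((1:ℝ)/3)^(k+1) ≤ 1/3 := by
          calc ((1:ℝ)/3)^(k+1) ≤ (1/3)^1 :=
                pow_le_pow_of_le_one (by norm_num) (by norm_num) (by omega)
            _ = 1/3 := pow_one _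
        linarith
      have hsplit : Set.Icc a b ⊆ Set.Icc a (1/3) ∪ Set.Icc (1/3) b := by
        intro x hx
        rcases le_or_gt x (1/3) with h | h
        · exact Or.inl ⟨hx.1, h⟩
        · exact Or.inr ⟨le_of_lt h, hx.2⟩
      calc μ (Set.Icc a b) ≤ μ (Set.Icc a (1/3)) + μ (Set.Icc (1/3) b) :=
            le_trans (measure_mono hsplit) (measure_union_le _ _)
        _ = μ (Set.Icc a (1/3)) := by
            rw [mid_zero μ hself (1/3) b (le_refl _) hb23, add_zero]
        _ = 2⁻¹ * μ (Set.Icc (3*a) (3*(1/3))) := left_zero μ hself a (1/3) (le_refl _)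
        _ ≤ 2 * (2⁻¹)^(k+1) := by
            rw [← hgoal]
            gcongr
            exact ih (3*a) (3*(1/3)) (by rw [pow_succ] at hab; nlinarith)
    · rcases le_or_gt b (2/3) with hb23 | hb23
      · rw [mid_zero μ hself a b (le_of_lt ha13) hb23]
        exact zero_le
      · have hsplit : Set.Icc a b ⊆ Set.Icc a (2/3) ∪ Set.Icc (2/3) b := by
          intro x hx
          rcases le_or_gt x (2/3) with h | h
          · exact Or.inl ⟨hx.1, h⟩
          · exact Or.inr ⟨le_of_lt h, hx.2⟩
        calc μ (Set.Icc a b) ≤ μ (Set.Icc a (2/3)) + μ (Set.Icc (2/3) b) :=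
              le_trans (measure_mono hsplit) (measure_union_le _ _)
          _ = μ (Set.Icc (2/3) b) := by
              rw [mid_zero μ hself a (2/3) (le_of_lt ha13) (le_refl _), zero_add]
          _ = 2⁻¹ * μ (Set.Icc (3*(2/3)-2) (3*b-2)) := right_zero μ hself (2/3) b (le_refl _)
          _ ≤ 2 * (2⁻¹)^(k+1) := by
              rw [← hgoal]
              gcongr
              exact ih (3*(2/3)-2) (3*b-2) (by rw [pow_succ] at hab; nlinarith)

lemma holder_bound (L : ℝ) (hL : 0 < L) (a b : ℝ) (hab : b - a ≤ L) :
    μ (Set.Icc a b) ≤ ENNReal.ofReal (4 * L ^ γ₀) := by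
  rcases le_or_gt 1 L with h1 | h1
  · have : μ (Set.Icc a b) ≤ 1 := prob_le_one
    refine le_trans this ?_
    rw [show (1 : ENNReal) = ENNReal.ofReal 1 by simp]
    apply ENNReal.ofReal_le_ofReal
    have : (1:ℝ) ≤ L ^ γ₀ := Real.one_le_rpow h1 gamma_nonneg
    linarith
  · have hex : ∃ n : ℕ, (1/3 : ℝ)^n < L := exists_pow_lt_of_lt_one hL (by norm_num)
    have hk0 : Nat.find hex ≠ 0 := by
      intro h0
      have := Nat.find_spec hex
      rw [h0] at this
      norm_num at this
      linarith
    obtain ⟨j, hj⟩ : ∃ j, Nat.find hex = j + 1 := ⟨Nat.find hex - 1, by omega⟩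
    have hlt : (1/3 : ℝ)^(j+1) < L := by rw [← hj]; exact Nat.find_spec hex
    have hle : L ≤ (1/3 : ℝ)^j := by
      by_contra hcon
      push_neg at hcon
      exact absurd hcon (by simpa using Nat.find_min hex (by omega : j < Nat.find hex))
    have hb1 : μ (Set.Icc a b) ≤ 2 * (2⁻¹ : ENNReal)^j :=
      interval_bound μ hself j a b (le_trans hab hle)
    refine le_trans hb1 ?_
    have hhalf : ENNReal.ofReal (1/2) = (2⁻¹ : ENNReal) := by
      rw [one_div, ENNReal.ofReal_inv_of_pos (by norm_num)]
      norm_num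
    have he : (2 : ENNReal) * (2⁻¹)^j = ENNReal.ofReal (2 * (1/2)^j) := by
      rw [ENNReal.ofReal_mul (by norm_num), ENNReal.ofReal_pow (by norm_num), hhalf]
      norm_num
    rw [he]
    apply ENNReal.ofReal_le_ofReal
    have hrp : ((1/3:ℝ)^(j+1)) ^ γ₀ ≤ L ^ γ₀ :=
      Real.rpow_le_rpow (by positivity) (le_of_lt hlt) gamma_nonneg
    rw [rpow_third_pow] at hrp
    have : ((1:ℝ)/2)^(j+1) = (1/2) * (1/2)^j := by ring
    rw [this] at hrp
    linarith

lemma ball_bound (c δ : ℝ) : μ (Metric.ball c δ) ≤ ENNReal.ofReal (4 * (2*δ) ^ γ₀) := by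
  rcases le_or_gt δ 0 with h | h
  · rw [Metric.ball_eq_empty.2 h]
    simp
  · refine le_trans (measure_mono ?_) (holder_bound μ hself (2*δ) (by linarith) (c-δ) (c+δ) (by linarith))
    rw [Real.ball_eq_Ioo]
    exact Set.Ioo_subset_Icc_self

end Aux

/-- Convergence part of the main theorem: if `ψ` is non-increasing and
`∑ n (3^n ψ(3^n))^γ < ∞` with `γ = log 2 / log 3`, then the set of points of the
Cantor set that are `ψ(q_int)`-approximable by infinitely many rationals of the
Cantor set has Cantor measure zero.  Here, for a rational of the Cantor set with
digit sequence `a`, prelength `ℓ` and minimal period `m`, the intrinsic denominator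
is `q_int = 3^ℓ (3^m − 1)`, and `μ` is the standard Cantor measure (characterized
by its self-similarity). -/
theorem statement18 (μ : Measure ℝ) [IsProbabilityMeasure μ]
    (hself : μ = (2⁻¹ : ENNReal) • μ.map (fun x : ℝ => x / 3) +
      (2⁻¹ : ENNReal) • μ.map (fun x : ℝ => x / 3 + 2 / 3))
    (ψ : ℝ → ℝ) (hψpos : ∀ r : ℝ, 0 < r → 0 < ψ r)
    (hψmono : ∀ r s : ℝ, 0 < r → r ≤ s → ψ s ≤ ψ r)
    (hsum : Summable (fun n : ℕ =>
      (n : ℝ) * (3 ^ n * ψ (3 ^ n)) ^ (Real.log 2 / Real.log 3))) :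
    μ {x : ℝ | x ∈ cantorSetK ∧
        {r : ℚ | (r : ℝ) ∈ cantorSetK ∧ ∃ (a : ℕ → ℕ) (ℓ m : ℕ),
          (∀ i, a i = 0 ∨ a i = 2) ∧ (r : ℝ) = ternaryExpansion a ∧
          IsLeast (preSet a) ℓ ∧ IsLeast (perSet a ℓ) m ∧
          |x - (r : ℝ)| < ψ ((3 : ℝ) ^ ℓ * (3 ^ m - 1))}.Infinite} = 0 := by
  classical
  set s : ℕ → Set ℝ := fun n =>
    ⋃ ℓ ∈ Finset.range n, ⋃ d : Fin n → Bool,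
      Metric.ball (ctr n ℓ d) (ψ ((3:ℝ)^(n-1))) with hsdef
  -- inclusion into the limsup set
  have hincl : {x : ℝ | x ∈ cantorSetK ∧
      {r : ℚ | (r : ℝ) ∈ cantorSetK ∧ ∃ (a : ℕ → ℕ) (ℓ m : ℕ),
        (∀ i, a i = 0 ∨ a i = 2) ∧ (r : ℝ) = ternaryExpansion a ∧
        IsLeast (preSet a) ℓ ∧ IsLeast (perSet a ℓ) m ∧
        |x - (r : ℝ)| < ψ ((3 : ℝ) ^ ℓ * (3 ^ m - 1))}.Infinite} ⊆
      Filter.limsup s Filter.atTop := by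
    rintro x ⟨-, hinf⟩
    rw [Filter.mem_limsup_iff_frequently_mem, Filter.frequently_atTop]
    intro N
    -- there is an approximating rational with ℓ + m ≥ N
    have key : ∃ (r : ℚ) (a : ℕ → ℕ) (ℓ m : ℕ),
        (∀ i, a i = 0 ∨ a i = 2) ∧ (r : ℝ) = ternaryExpansion a ∧
        IsLeast (preSet a) ℓ ∧ IsLeast (perSet a ℓ) m ∧
        |x - (r : ℝ)| < ψ ((3 : ℝ) ^ ℓ * (3 ^ m - 1)) ∧ N ≤ ℓ + m := by
      by_contra hcon
      push_neg at hcon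
      apply hinf
      have hfin : (⋃ n ∈ Set.Iio N, ⋃ ℓ ∈ Set.Iio n, Set.range (ctr n ℓ)).Finite := by
        apply Set.Finite.biUnion (Set.finite_Iio N)
        intro n _
        apply Set.Finite.biUnion (Set.finite_Iio n)
        intro ℓ _
        exact Set.finite_range _
      have hinj : Set.InjOn (fun r : ℚ => (r : ℝ))
          ((fun r : ℚ => (r : ℝ)) ⁻¹' (⋃ n ∈ Set.Iio N, ⋃ ℓ ∈ Set.Iio n, Set.range (ctr n ℓ))) :=
        (Rat.cast_injective (α := ℝ)).injOn
      refine Set.Finite.subset (Set.Finite.preimage hinj hfin) ?_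
      rintro r ⟨-, a, ℓ, m, hd, heq, hpre, hper, hball⟩
      have hm1 : 1 ≤ m := hper.1.1
      have hp := hper.1.2
      have hlt : ℓ + m < N := hcon r a ℓ m hd heq hpre hper hball
      simp only [Set.mem_preimage, Set.mem_iUnion, Set.mem_Iio]
      refine ⟨ℓ + m, hlt, ℓ, by omega, ⟨fun i => decide (a (i : ℕ) = 2), ?_⟩⟩
      rw [ctr_eq a ℓ m hd hm1 hp]
      exact heq.symm
    obtain ⟨r, a, ℓ, m, hd, heq, hpre, hper, hball, hN⟩ := key
    have hm1 : 1 ≤ m := hper.1.1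
    have hp := hper.1.2
    refine ⟨ℓ + m, hN, ?_⟩
    simp only [hsdef, Set.mem_iUnion, Finset.mem_range]
    refine ⟨ℓ, by omega, fun i => decide (a (i : ℕ) = 2), ?_⟩
    rw [Metric.mem_ball, Real.dist_eq, ctr_eq a ℓ m hd hm1 hp, ← heq]
    -- |x - r| < ψ (3^(ℓ+m-1))
    have hqpos : (0:ℝ) < 3 ^ (ℓ + m - 1) := by positivity
    have hqle : (3:ℝ) ^ (ℓ + m - 1) ≤ (3:ℝ) ^ ℓ * (3 ^ m - 1) := by
      have h1 : ℓ + m - 1 = ℓ + (m - 1) := by omega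
      rw [h1, pow_add]
      have h2 : (3:ℝ) ^ m = 3 * 3 ^ (m - 1) := by
        rw [← pow_succ']
        congr 1
        omega
      have h3 : (1:ℝ) ≤ 3 ^ (m-1) := one_le_pow₀ (by norm_num)
      have h4 : (3:ℝ) ^ (m-1) ≤ 3 ^ m - 1 := by rw [h2]; nlinarith
      have h5 : (0:ℝ) < 3 ^ ℓ := by positivity
      nlinarith
    exact lt_of_lt_of_le hball (hψmono _ _ hqpos hqle)
  -- Borel–Cantelli
  refine measure_mono_null hincl (MeasureTheory.measure_limsup_atTop_eq_zero ?_)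
  -- summability of the measures
  set b : ℕ → ℝ := fun n => (n:ℝ) * 2^n * (4 * (2 * ψ ((3:ℝ)^(n-1))) ^ γ₀) with hbdef
  have hψnn : ∀ n : ℕ, 0 < ψ ((3:ℝ)^n) := fun n => hψpos _ (by positivity)
  have hbnn : ∀ n, 0 ≤ b n := by
    intro n
    have h1 : 0 ≤ (2 * ψ ((3:ℝ)^(n-1))) ^ γ₀ :=
      Real.rpow_nonneg (by linarith [hψnn (n-1)]) _
    positivity
  have hμs : ∀ n, μ (s n) ≤ ENNReal.ofReal (b n) := by
    intro n
    have hball : ∀ (ℓ : ℕ) (d : Fin n → Bool),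
        μ (Metric.ball (ctr n ℓ d) (ψ ((3:ℝ)^(n-1)))) ≤
          ENNReal.ofReal (4 * (2 * ψ ((3:ℝ)^(n-1))) ^ γ₀) :=
      fun ℓ d => ball_bound μ hself _ _
    calc μ (s n) ≤ ∑ ℓ ∈ Finset.range n,
          μ (⋃ d : Fin n → Bool, Metric.ball (ctr n ℓ d) (ψ ((3:ℝ)^(n-1)))) :=
            measure_biUnion_finset_le _ _
      _ ≤ ∑ ℓ ∈ Finset.range n, ∑ d : Fin n → Bool,
            μ (Metric.ball (ctr n ℓ d) (ψ ((3:ℝ)^(n-1)))) := by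
            gcongr with ℓ hℓ
            exact measure_iUnion_fintype_le μ _
            
      _ ≤ ∑ ℓ ∈ Finset.range n, ∑ _d : Fin n → Bool,
            ENNReal.ofReal (4 * (2 * ψ ((3:ℝ)^(n-1))) ^ γ₀) := by
            gcongr with ℓ hℓ d hd
            exact hball ℓ d
      _ = (n * 2^n : ℕ) * ENNReal.ofReal (4 * (2 * ψ ((3:ℝ)^(n-1))) ^ γ₀) := by
            rw [Finset.sum_const, Finset.sum_const, Finset.card_univ, Fintype.card_fun]
            simp [Finset.card_range, nsmul_eq_mul, mul_assoc]
      _ = ENNReal.ofReal (b n) := by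
            rw [hbdef]
            rw [← ENNReal.ofReal_natCast (n * 2^n), ← ENNReal.ofReal_mul (by positivity)]
            congr 1
            push_cast
            ring
  have hsummable : Summable b := by
    have h2 : Summable (fun n : ℕ => (n : ℝ) * ((3:ℝ) ^ n * ψ (3 ^ n)) ^ γ₀) := hsum
    have h3 : Summable (fun n : ℕ => ((n:ℝ)+1) * ((3:ℝ) ^ (n+1) * ψ (3 ^ (n+1))) ^ γ₀) := by
      have := (summable_nat_add_iff (f := fun n : ℕ => (n : ℝ) * ((3:ℝ) ^ n * ψ (3 ^ n)) ^ γ₀) 1).2 h2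
      convert this using 2 with n
      · rfl
      push_cast
      ring
    apply (summable_nat_add_iff 2).1
    apply Summable.of_nonneg_of_le (fun n => hbnn (n+2)) ?_ (h3.mul_left 64)
    intro n
    have hsub : (n + 2) - 1 = n + 1 := by omega
    have ht : 0 < ψ ((3:ℝ)^(n+1)) := hψnn (n+1)
    set t := ψ ((3:ℝ)^(n+1)) with htdef
    have htγ : 0 ≤ t ^ γ₀ := Real.rpow_nonneg ht.le _
    have e1 : ((2:ℝ)*t)^γ₀ = 2^γ₀ * t^γ₀ := Real.mul_rpow (by norm_num) ht.le
    have e2 : (2:ℝ)^γ₀ ≤ 2 := by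
      calc (2:ℝ)^γ₀ ≤ (2:ℝ)^(1:ℝ) :=
            Real.rpow_le_rpow_of_exponent_le (by norm_num) (le_of_lt gamma_lt_one)
        _ = 2 := Real.rpow_one 2
    have e3 : ((3:ℝ)^(n+1) * t)^γ₀ = 2^(n+1) * t^γ₀ := by
      rw [Real.mul_rpow (by positivity) ht.le, rpow_three_pow]
    have e4 : (0:ℝ) < 2^(n+1) := by positivity
    have e5 : (0:ℝ) ≤ 2^γ₀ := Real.rpow_nonneg (by norm_num) _
    calc b (n+2) = ((n:ℝ)+2) * 2^(n+2) * (4 * ((2:ℝ)*t)^γ₀) := by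
          simp only [hbdef]
          rw [hsub]
          push_cast
          ring
      _ = ((n:ℝ)+2) * 2^(n+2) * 4 * (2^γ₀ * t^γ₀) := by rw [e1]; ring
      _ ≤ ((n:ℝ)+2) * 2^(n+2) * 4 * (2 * t^γ₀) := by
          have hpos : (0:ℝ) ≤ ((n:ℝ)+2) * 2^(n+2) * 4 := by positivity
          have : (2:ℝ)^γ₀ * t^γ₀ ≤ 2 * t^γ₀ := mul_le_mul_of_nonneg_right e2 htγ
          nlinarith
      _ ≤ 64 * (((n:ℝ)+1) * ((3:ℝ)^(n+1) * t)^γ₀) := by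
          rw [e3]
          have hP : (0:ℝ) ≤ 2^(n+1) * t^γ₀ := mul_nonneg e4.le htγ
          have h2 : 16*((n:ℝ)+2) ≤ 64*((n:ℝ)+1) := by
            have : (0:ℝ) ≤ (n:ℝ) := Nat.cast_nonneg n
            linarith
          calc ((n:ℝ)+2) * 2^(n+2) * 4 * (2 * t^γ₀)
              = 16*((n:ℝ)+2) * (2^(n+1) * t^γ₀) := by ring
            _ ≤ 64*((n:ℝ)+1) * (2^(n+1) * t^γ₀) := mul_le_mul_of_nonneg_right h2 hP
            _ = 64 * (((n:ℝ)+1) * (2^(n+1) * t^γ₀)) := by ring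
  have hle : ∑' n, μ (s n) ≤ ENNReal.ofReal (∑' n, b n) := by
    rw [ENNReal.ofReal_tsum_of_nonneg hbnn hsummable]
    exact ENNReal.tsum_le_tsum hμs
  exact (lt_of_le_of_lt hle ENNReal.ofReal_lt_top).ne
end
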